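/- arXiv:1311.3597 — 4 statements merged into one kernel-verified Lean document; each statement's English description precedes it below -/
import Mathlib

section
/- Let n ≥ 1 be an integer and g : G_n → ℂ, where G_n = {j/n : j ∈ ℤ, -n ≤ j ≤ n-1}. Let ĝ_n(m) = (1/n)·Σ_{j=-n}^{n-1} g(j/n)·e^{-πi(j/n)m}, let g' be the discrete derivative of g and g'' = (g')' the second discrete derivative, and set φ_n(m) = n·(e^{-πim/n} - 1), ψ_n(m) = n·(e^{πim/n} - 1), C_n(m) = g((n-1)/n)·e^{-πi((n-1)/n)m} - g(-1)·e^{πim}, D_n(m) = -(1/n)·g(-1)·e^{πim/n}·e^{πim}, C'_n(m) = -g'(-1)·e^{πim}, D'_n(m) = -(1/n)·g'(-1)·e^{πim/n}·e^{πim}, and F_n(m) = ψ_n(m)·φ_n(m)·D_n(m) - ψ_n(m)·C_n(m) + φ_n(m)·D'_n(m) - C'_n(m). Then for every integer m with -n ≤ m ≤ n-1 and m ≠ 0, ĝ_n(m) = ((g'')̂_n(m) + F_n(m)) / ψ_n(m)². -/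
/-! Summation by parts. The kernel `e(j) = e^{-πi(j/n)m}` satisfies `e(j) = e^{πim/n} e(j+1)`,
so the transform of a discrete derivative is `ψ_n(m)` times the transform plus boundary terms
at `j = n - 1` and `j = -n`. Applying this to `g` and to `g'` (which vanishes at `(n-1)/n`),
and simplifying `F_n(m)` with `φ_n(m) e^{πim/n} / n = 1 - e^{πim/n}`, everything cancels except
`ψ_n(m)² ĝ_n(m)`; finally `ψ_n(m) ≠ 0` because `m` is not a multiple of `2n`. -/

/-- The discrete derivative on the grid G_n = {j/n : -n ≤ j ≤ n-1}, indexed by j: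
for a function f on the grid points (given as f : ℤ → ℂ, with f j the value at j/n),
(dD n f) j = n·(f (j+1) - f j) for j < n-1, and (dD n f) (n-1) = 0. -/
noncomputable def dD (n : ℕ) (f : ℤ → ℂ) (j : ℤ) : ℂ :=
  if j = (n : ℤ) - 1 then 0 else (n : ℂ) * (f (j + 1) - f j)

/-- The m-th discrete Fourier coefficient of f : ℤ → ℂ (f j the value at the grid
point j/n): f̂_n(m) = (1/n)·Σ_{j=-n}^{n-1} f(j)·e^{-πi(j/n)m}. -/
noncomputable def dFourier (n : ℕ) (f : ℤ → ℂ) (m : ℤ) : ℂ :=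
  (1 / (n : ℂ)) * ∑ j ∈ Finset.Icc (-(n : ℤ)) ((n : ℤ) - 1),
    f j * Complex.exp (-((Real.pi : ℂ) * Complex.I * ((j : ℂ) / (n : ℂ)) * (m : ℂ)))

open Complex Finset
open scoped Real

noncomputable def dFourierKernel (n : ℕ) (m j : ℤ) : ℂ :=
  exp (-(π * I * ((j : ℂ) / n) * m))

lemma dFourier_eq_sum_mul_kernel (n : ℕ) (f : ℤ → ℂ) (m : ℤ) :
    dFourier n f m = 1 / n * ∑ j ∈ Icc (-(n : ℤ)) (n - 1), f j * dFourierKernel n m j :=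
  rfl

lemma dFourierKernel_eq_mul_kernel_add_one {n : ℕ} (hn : n ≠ 0) (m j : ℤ) :
    dFourierKernel n m j = exp (π * I * m / n) * dFourierKernel n m (j + 1) := by
  rw [dFourierKernel, dFourierKernel, ← exp_add]
  congr 1
  push_cast
  field_simp
  ring

lemma dFourierKernel_neg_self {n : ℕ} (hn : n ≠ 0) (m : ℤ) :
    dFourierKernel n m (-n) = exp (π * I * m) := by
  rw [dFourierKernel]
  congr 1
  push_cast
  field_simp

lemma dD_self_sub_one (n : ℕ) (f : ℤ → ℂ) : dD n f (n - 1) = 0 :=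
  if_pos rfl

lemma dD_of_ne {n : ℕ} (f : ℤ → ℂ) {j : ℤ} (hj : j ≠ n - 1) : dD n f j = n * (f (j + 1) - f j) :=
  if_neg hj

lemma Int.sum_Ico_comp_add_one {M : Type*} [AddCommMonoid M] (u : ℤ → M) (a b : ℤ) :
    ∑ j ∈ Ico a b, u (j + 1) = ∑ j ∈ Ioc a b, u j := by
  rw [sum_Ico_add', Ico_add_one_add_one_eq_Ioc]

lemma exp_pi_mul_I_mul_div_eq_one_iff {n : ℕ} (hn : n ≠ 0) (m : ℤ) :
    exp (π * I * m / n) = 1 ↔ (2 * n : ℤ) ∣ m := by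
  rw [exp_eq_one_iff]
  constructor
  · rintro ⟨k, hk⟩
    refine ⟨k, ?_⟩
    have : (m : ℂ) = 2 * n * k := by
      field_simp at hk
      linear_combination hk
    exact_mod_cast this
  · rintro ⟨k, rfl⟩
    exact ⟨k, by push_cast; field_simp⟩

lemma dFourier_dD {n : ℕ} (hn : n ≠ 0) (f : ℤ → ℂ) (m : ℤ) :
    dFourier n (dD n f) m = n * (exp (π * I * m / n) - 1) * dFourier n f m
      + f (n - 1) * dFourierKernel n m (n - 1)
      - f (-n) * exp (π * I * m / n) * exp (π * I * m) := by
  set A := exp (π * I * m / n)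
  set u : ℤ → ℂ := fun j => f j * dFourierKernel n m j
  have hle : -(n : ℤ) ≤ n - 1 := by omega
  have hterm : ∀ j ∈ Ico (-(n : ℤ)) (n - 1), dD n f j * dFourierKernel n m j
      = n * A * u (j + 1) - n * u j := by
    intro j hj
    simp only [u, dD_of_ne f (mem_Ico.1 hj).2.ne, dFourierKernel_eq_mul_kernel_add_one hn m j]
    ring
  have hsum : ∑ j ∈ Icc (-(n : ℤ)) (n - 1), dD n f j * dFourierKernel n m j
      = n * A * ∑ j ∈ Ioc (-(n : ℤ)) (n - 1), u j - n * ∑ j ∈ Ico (-(n : ℤ)) (n - 1), u j := by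
    rw [← sum_Ico_add_eq_sum_Icc hle, dD_self_sub_one, zero_mul, add_zero, sum_congr rfl hterm,
      sum_sub_distrib, ← mul_sum, ← mul_sum, Int.sum_Ico_comp_add_one]
  have hIoc := add_sum_Ioc_eq_sum_Icc hle (f := u)
  have hIco := sum_Ico_add_eq_sum_Icc hle (f := u)
  have hn' : (n : ℂ) ≠ 0 := Nat.cast_ne_zero.2 hn
  rw [dFourier_eq_sum_mul_kernel, dFourier_eq_sum_mul_kernel, hsum, ← dFourierKernel_neg_self hn]
  field_simp
  linear_combination A * hIoc - hIco

/-- Second-order relation for the discrete Fourier transform: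
ĝ_n(m) = (ĝ''_n(m) + F_n(m)) / ψ_n(m)² for m ≠ 0. -/
theorem discrete_fourier_second_derivative_formula
    (n : ℕ) (hn : 1 ≤ n) (g : ℝ → ℂ)
    (gs : ℤ → ℂ) (hgs : gs = fun j : ℤ => g ((j : ℝ) / (n : ℝ)))
    (φ ψ C D C' D' F : ℤ → ℂ)
    (hφ : ∀ m : ℤ, φ m = (n : ℂ) * (Complex.exp (-((Real.pi : ℂ) * Complex.I * (m : ℂ) / (n : ℂ))) - 1))
    (hψ : ∀ m : ℤ, ψ m = (n : ℂ) * (Complex.exp ((Real.pi : ℂ) * Complex.I * (m : ℂ) / (n : ℂ)) - 1))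
    (hC : ∀ m : ℤ, C m = g (((n : ℝ) - 1) / (n : ℝ)) *
          Complex.exp (-((Real.pi : ℂ) * Complex.I * (((n : ℂ) - 1) / (n : ℂ)) * (m : ℂ)))
        - g (-1) * Complex.exp ((Real.pi : ℂ) * Complex.I * (m : ℂ)))
    (hD : ∀ m : ℤ, D m = -(1 / (n : ℂ)) * g (-1) *
          Complex.exp ((Real.pi : ℂ) * Complex.I * (m : ℂ) / (n : ℂ)) *
          Complex.exp ((Real.pi : ℂ) * Complex.I * (m : ℂ)))
    (hC' : ∀ m : ℤ, C' m = -(dD n gs (-(n : ℤ))) * Complex.exp ((Real.pi : ℂ) * Complex.I * (m : ℂ)))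
    (hD' : ∀ m : ℤ, D' m = -(1 / (n : ℂ)) * dD n gs (-(n : ℤ)) *
          Complex.exp ((Real.pi : ℂ) * Complex.I * (m : ℂ) / (n : ℂ)) *
          Complex.exp ((Real.pi : ℂ) * Complex.I * (m : ℂ)))
    (hF : ∀ m : ℤ, F m = ψ m * φ m * D m - ψ m * C m + φ m * D' m - C' m) :
    ∀ m : ℤ, -(n : ℤ) ≤ m → m ≤ (n : ℤ) - 1 → m ≠ 0 →
      dFourier n gs m = (dFourier n (dD n (dD n gs)) m + F m) / (ψ m) ^ 2 := by
  intro m hm_ge hm_le hm0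
  have hn0 : n ≠ 0 := by omega
  have hψ0 : ψ m ≠ 0 := by
    rw [hψ, Ne, mul_eq_zero, not_or, sub_eq_zero, exp_pi_mul_I_mul_div_eq_one_iff hn0]
    exact ⟨Nat.cast_ne_zero.2 hn0,
      fun h => hm0 (Int.eq_zero_of_abs_lt_dvd h (abs_lt.2 ⟨by omega, by omega⟩))⟩
  have hφA : φ m * (1 / n * exp (π * I * m / n)) = 1 - exp (π * I * m / n) := by
    rw [hφ, exp_neg]
    field_simp
  have hgs_last : gs (n - 1) = g ((n - 1) / n) := by simp [hgs]
  have hgs_first : gs (-n) = g (-1) := by simp [hgs, hn0]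
  have hK : dFourierKernel n m (n - 1) = exp (-(π * I * ((n - 1) / n) * m)) := by
    simp [dFourierKernel]
  have h1 := dFourier_dD hn0 gs m
  have h2 := dFourier_dD hn0 (dD n gs) m
  rw [hgs_last, hgs_first, hK, ← hψ m] at h1
  rw [dD_self_sub_one, zero_mul, add_zero, ← hψ m] at h2
  rw [eq_div_iff (pow_ne_zero 2 hψ0), hF, hC, hD, hC', hD']
  linear_combination -h2 - ψ m * h1 + (ψ m * g (-1) + dD n gs (-n)) * exp (π * I * m) * hφA
end

section
/- Let g : [-1,1] → ℂ be infinitely differentiable with g(-1) = g(1) = 0. For each integer n ≥ 1, restrict g to the grid G_n = {j/n : j ∈ ℤ, -n ≤ j ≤ n-1}, let g'' denote the second discrete derivative of this restriction, let (g'')̂_n(m) = (1/n)·Σ_{j=-n}^{n-1} g''(j/n)·e^{-πi(j/n)m}, and let F_n(m) = ψ_n(m)·φ_n(m)·D_n(m) - ψ_n(m)·C_n(m) + φ_n(m)·D'_n(m) - C'_n(m), where φ_n(m) = n·(e^{-πim/n} - 1), ψ_n(m) = n·(e^{πim/n} - 1), C_n(m) = g((n-1)/n)·e^{-πi((n-1)/n)m}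 - g(-1)·e^{πim}, D_n(m) = -(1/n)·g(-1)·e^{πim/n}·e^{πim}, C'_n(m) = -g'(-1)·e^{πim}, D'_n(m) = -(1/n)·g'(-1)·e^{πim/n}·e^{πim} (g' the discrete derivative of the restriction). Then there exists a constant C ∈ ℝ, depending only on g, such that for all n ≥ 1 and all integers m with -n ≤ m ≤ n-1, |(g'')̂_n(m)| ≤ C and |F_n(m)| ≤ C. -/
/-- φ_n(m) = n·(e^{-πim/n} - 1). -/
noncomputable def dPhi (n : ℕ) (m : ℤ) : ℂ :=
  (n : ℂ) * (Complex.exp (-((Real.pi : ℂ) * Complex.I * (m : ℂ) / (n : ℂ))) - 1)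

/-- ψ_n(m) = n·(e^{πim/n} - 1). -/
noncomputable def dPsi (n : ℕ) (m : ℤ) : ℂ :=
  (n : ℂ) * (Complex.exp ((Real.pi : ℂ) * Complex.I * (m : ℂ) / (n : ℂ)) - 1)

/-- The boundary term F_n(m) = ψ_n(m)·φ_n(m)·D_n(m) - ψ_n(m)·C_n(m) + φ_n(m)·D'_n(m) - C'_n(m),
for a function g : ℝ → ℂ restricted to the grid G_n. -/
noncomputable def dF (n : ℕ) (g : ℝ → ℂ) (m : ℤ) : ℂ :=
  dPsi n m * dPhi n m *
      (-(1 / (n : ℂ)) * g (-1) * Complex.exp ((Real.pi : ℂ) * Complex.I * (m : ℂ) / (n : ℂ)) *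
        Complex.exp ((Real.pi : ℂ) * Complex.I * (m : ℂ)))
    - dPsi n m *
      (g (((n : ℝ) - 1) / (n : ℝ)) *
          Complex.exp (-((Real.pi : ℂ) * Complex.I * (((n : ℂ) - 1) / (n : ℂ)) * (m : ℂ)))
        - g (-1) * Complex.exp ((Real.pi : ℂ) * Complex.I * (m : ℂ)))
    + dPhi n m *
      (-(1 / (n : ℂ)) * dD n (fun j : ℤ => g ((j : ℝ) / (n : ℝ))) (-(n : ℤ)) *
        Complex.exp ((Real.pi : ℂ) * Complex.I * (m : ℂ) / (n : ℂ)) *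
        Complex.exp ((Real.pi : ℂ) * Complex.I * (m : ℂ)))
    - (-(dD n (fun j : ℤ => g ((j : ℝ) / (n : ℝ))) (-(n : ℤ))) *
        Complex.exp ((Real.pi : ℂ) * Complex.I * (m : ℂ)))

private lemma myexp_abs (r : ℝ) (z : ℂ) (h : z = (r : ℂ) * Complex.I) :
    ‖Complex.exp z‖ = 1 := by
  rw [h, Complex.norm_exp_ofReal_mul_I]

/-- For a smooth function g on [-1,1] vanishing at the endpoints, the discrete Fourier
coefficients of the second discrete derivative, and the boundary terms F_n(m), are
bounded uniformly in n and m. -/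
theorem second_derivative_fourier_uniformly_bounded
    (g : ℝ → ℂ) (hg : ContDiffOn ℝ (⊤ : ℕ∞) g (Set.Icc (-1) 1))
    (hm1 : g (-1) = 0) (h1 : g 1 = 0) :
    ∃ C : ℝ, ∀ n : ℕ, 1 ≤ n → ∀ m : ℤ, -(n : ℤ) ≤ m → m ≤ (n : ℤ) - 1 →
      ‖dFourier n (dD n (dD n (fun j : ℤ => g ((j : ℝ) / (n : ℝ))))) m‖ ≤ C ∧
      ‖dF n g m‖ ≤ C := by
  set s : Set ℝ := Set.Icc (-1) 1 with hsdef
  have hs : UniqueDiffOn ℝ s := uniqueDiffOn_Icc (by norm_num)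
  have hconv : Convex ℝ s := convex_Icc _ _
  set g1 : ℝ → ℂ := derivWithin g s with hg1def
  have hg1 : ContDiffOn ℝ (⊤ : ℕ∞) g1 s := hg.derivWithin hs (by simp)
  set g2 : ℝ → ℂ := derivWithin g1 s with hg2def
  have hg2 : ContDiffOn ℝ (⊤ : ℕ∞) g2 s := hg1.derivWithin hs (by simp)
  obtain ⟨K1, hK1⟩ := (isCompact_Icc (a := (-1:ℝ)) (b := 1)).exists_bound_of_continuousOn
    hg1.continuousOn
  obtain ⟨K2, hK2⟩ := (isCompact_Icc (a := (-1:ℝ)) (b := 1)).exists_bound_of_continuousOn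
    hg2.continuousOn
  set L1 : ℝ := max K1 0 with hL1def
  set L2 : ℝ := max K2 0 with hL2def
  have hL1 : ∀ x ∈ s, ‖g1 x‖ ≤ L1 := fun x hx => (hK1 x hx).trans (le_max_left _ _)
  have hL2 : ∀ x ∈ s, ‖g2 x‖ ≤ L2 := fun x hx => (hK2 x hx).trans (le_max_left _ _)
  have hL1nn : (0:ℝ) ≤ L1 := le_max_right _ _
  have hL2nn : (0:ℝ) ≤ L2 := le_max_right _ _
  have lip_g : ∀ x ∈ s, ∀ y ∈ s, ‖g y - g x‖ ≤ L1 * ‖y - x‖ := fun x hx y hy =>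
    hconv.norm_image_sub_le_of_norm_derivWithin_le (hg.differentiableOn (by simp)) hL1 hx hy
  have lip_g1 : ∀ x ∈ s, ∀ y ∈ s, ‖g1 y - g1 x‖ ≤ L2 * ‖y - x‖ := fun x hx y hy =>
    hconv.norm_image_sub_le_of_norm_derivWithin_le (hg1.differentiableOn (by simp)) hL2 hx hy
  refine ⟨5 * L1 + 2 * L2, fun n hn m hmlo hmhi => ?_⟩
  set f : ℤ → ℂ := fun j : ℤ => g ((j : ℝ) / (n : ℝ)) with hfdef
  have hnR : (0:ℝ) < (n : ℝ) := by exact_mod_cast hn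
  have hn1R : (1:ℝ) ≤ (n : ℝ) := by exact_mod_cast hn
  have hnne : (n : ℝ) ≠ 0 := ne_of_gt hnR
  have hmem : ∀ j : ℤ, -(n:ℤ) ≤ j → j ≤ (n:ℤ) → ((j:ℝ)/(n:ℝ)) ∈ s := by
    intro j hj1 hj2
    rw [hsdef, Set.mem_Icc]
    constructor
    · rw [le_div_iff₀ hnR]
      have : (-(n:ℤ) : ℝ) ≤ (j : ℝ) := by exact_mod_cast hj1
      push_cast at this ⊢
      linarith
    · rw [div_le_one hnR]
      exact_mod_cast hj2
  -- first-difference bound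
  have hA : ∀ j : ℤ, -(n:ℤ) ≤ j → j + 1 ≤ (n:ℤ) →
      ‖(n : ℂ) * (f (j+1) - f j)‖ ≤ L1 := by
    intro j hj1 hj2
    have h1m : ((j:ℝ))/(n:ℝ) ∈ s := hmem j hj1 (by omega)
    have h2m : (((j+1:ℤ)):ℝ)/(n:ℝ) ∈ s := hmem _ (by omega) hj2
    have hl := lip_g _ h1m _ h2m
    have hdist : ‖(((j+1:ℤ)):ℝ)/(n:ℝ) - (j:ℝ)/(n:ℝ)‖ = 1/(n:ℝ) := by
      push_cast
      rw [Real.norm_eq_abs, show ((j:ℝ)+1)/(n:ℝ) - (j:ℝ)/(n:ℝ) = 1/(n:ℝ) by field_simp; ring,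
        abs_of_pos (by positivity)]
    rw [hdist] at hl
    calc ‖(n : ℂ) * (f (j+1) - f j)‖ = (n:ℝ) * ‖f (j+1) - f j‖ := by
          rw [norm_mul, Complex.norm_natCast]
      _ ≤ (n:ℝ) * (L1 * (1/(n:ℝ))) := by
          refine mul_le_mul_of_nonneg_left ?_ (le_of_lt hnR)
          simpa [hfdef] using hl
      _ = L1 := by field_simp
  -- second-difference bound
  have hB : ∀ j : ℤ, -(n:ℤ) ≤ j → j + 2 ≤ (n:ℤ) →
      ‖(n : ℂ) * ((n : ℂ) * (f (j+2) - f (j+1)) - (n : ℂ) * (f (j+1) - f j))‖ ≤ L2 := by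
    intro j hj1 hj2
    set x : ℝ := (j:ℝ)/(n:ℝ) with hxdef
    set δ : ℝ := 1/(n:ℝ) with hddef
    have hδ : 0 < δ := by positivity
    have hxlo : -1 ≤ x := (hmem j hj1 (by omega)).1
    have hx2 : x + δ + δ ≤ 1 := by
      have := (hmem (j+2) (by omega) hj2).2
      push_cast at this
      rw [hxdef, hddef]
      have heq : ((j:ℝ)+2)/(n:ℝ) = (j:ℝ)/(n:ℝ) + 1/(n:ℝ) + 1/(n:ℝ) := by field_simp; ring
      linarith [heq ▸ this]
    set t : Set ℝ := Set.Icc x (x + δ) with htdef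
    have hsub : t ⊆ s := by
      intro y hy
      rw [htdef, Set.mem_Icc] at hy
      rw [hsdef, Set.mem_Icc]
      constructor <;> linarith
    have hmap : ∀ y ∈ t, y + δ ∈ s := by
      intro y hy
      rw [htdef, Set.mem_Icc] at hy
      rw [hsdef, Set.mem_Icc]
      constructor <;> linarith
    set F : ℝ → ℂ := fun y => g (y + δ) - g y with hFdef
    set F' : ℝ → ℂ := fun y => g1 (y + δ) - g1 y with hF'def
    have hder : ∀ y ∈ t, HasDerivWithinAt F (F' y) t y := by
      intro y hy
      have hys : y ∈ s := hsub hy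
      have hyd : y + δ ∈ s := hmap y hy
      have d1 : HasDerivWithinAt g (g1 (y+δ)) s (y+δ) :=
        (hg.differentiableOn (by simp) _ hyd).hasDerivWithinAt
      have d2 : HasDerivWithinAt (fun z : ℝ => z + δ) 1 t y :=
        (hasDerivWithinAt_id y t).add_const δ
      have d3 := HasDerivWithinAt.scomp_of_eq y d1 d2 (fun z hz => hmap z hz) rfl
      have d4 : HasDerivWithinAt g (g1 y) t y :=
        ((hg.differentiableOn (by simp) _ hys).hasDerivWithinAt).mono hsub
      have := d3.sub d4; simp only [one_smul] at this; exact this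
    have hbd : ∀ y ∈ t, ‖F' y‖ ≤ L2 * δ := by
      intro y hy
      have := lip_g1 y (hsub hy) (y + δ) (hmap y hy)
      simpa [hF'def, abs_of_pos hδ] using this
    have hxt : x ∈ t := Set.left_mem_Icc.2 (by linarith)
    have hyt : x + δ ∈ t := Set.right_mem_Icc.2 (by linarith)
    have mvt := Convex.norm_image_sub_le_of_norm_hasDerivWithin_le hder hbd
      (convex_Icc x (x + δ)) hxt hyt
    have hnorm : ‖x + δ - x‖ = δ := by
      rw [Real.norm_eq_abs, show x + δ - x = δ by ring, abs_of_pos hδ]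
    rw [hnorm] at mvt
    have hval : (n : ℂ) * ((n : ℂ) * (f (j+2) - f (j+1)) - (n : ℂ) * (f (j+1) - f j))
        = (n:ℂ)^2 * (F (x + δ) - F x) := by
      have e2 : (((j+2:ℤ)):ℝ)/(n:ℝ) = x + δ + δ := by
        rw [hxdef, hddef]; push_cast; field_simp; try ring
      have e1 : (((j+1:ℤ)):ℝ)/(n:ℝ) = x + δ := by
        rw [hxdef, hddef]; push_cast; field_simp; try ring
      simp only [hfdef, hFdef, e1, e2]
      ring
    rw [hval, norm_mul, norm_pow, Complex.norm_natCast]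
    calc (n:ℝ)^2 * ‖F (x+δ) - F x‖ ≤ (n:ℝ)^2 * (L2 * δ * δ) := by
          refine mul_le_mul_of_nonneg_left mvt (by positivity)
      _ = L2 := by rw [hddef]; field_simp
  -- the value of dD f at -n
  have hnm1 : (-(n:ℤ)) ≠ (n:ℤ) - 1 := by omega
  have hd : ‖dD n f (-(n:ℤ))‖ ≤ L1 := by
    rw [dD, if_neg hnm1]
    exact hA (-(n:ℤ)) le_rfl (by omega)
  constructor
  · -- Fourier bound
    have key : ∀ j ∈ Finset.Icc (-(n:ℤ)) ((n:ℤ)-1),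
        ‖dD n (dD n f) j‖ ≤ L2 + (if j = (n:ℤ)-2 then (n:ℝ) * L1 else 0) := by
      intro j hj
      rw [Finset.mem_Icc] at hj
      by_cases hj1 : j = (n:ℤ) - 1
      · rw [dD, if_pos hj1, norm_zero, if_neg (by omega)]
        simpa using hL2nn
      by_cases hj2 : j = (n:ℤ) - 2
      · rw [if_pos hj2, dD, if_neg hj1, dD, if_pos (by omega), dD, if_neg hj1]
        calc ‖(n:ℂ) * (0 - (n:ℂ) * (f (j+1) - f j))‖
            = (n:ℝ) * ‖(n:ℂ) * (f (j+1) - f j)‖ := by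
              rw [zero_sub, norm_mul, Complex.norm_natCast, norm_neg]
          _ ≤ (n:ℝ) * L1 := mul_le_mul_of_nonneg_left (hA j hj.1 (by omega)) (le_of_lt hnR)
          _ ≤ L2 + (n:ℝ) * L1 := by linarith
      · rw [if_neg hj2, dD, if_neg hj1, dD, if_neg (by omega), dD, if_neg hj1, add_zero]
        have := hB j hj.1 (by omega)
        calc ‖(n:ℂ) * ((n:ℂ) * (f (j+1+1) - f (j+1)) - (n:ℂ) * (f (j+1) - f j))‖
            = ‖(n:ℂ) * ((n:ℂ) * (f (j+2) - f (j+1)) - (n:ℂ) * (f (j+1) - f j))‖ := by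
              norm_num [show j+1+1 = j+2 by ring]
          _ ≤ L2 := this
    have hcard : (Finset.Icc (-(n:ℤ)) ((n:ℤ)-1)).card = 2 * n := by
      rw [Int.card_Icc]
      omega
    have habs : ‖dFourier n (dD n (dD n f)) m‖
        ≤ (1/(n:ℝ)) * ∑ j ∈ Finset.Icc (-(n:ℤ)) ((n:ℤ)-1), ‖dD n (dD n f) j‖ := by
      rw [dFourier, norm_mul]
      have h1n : ‖(1 / (n:ℂ))‖ = 1/(n:ℝ) := by
        rw [norm_div, norm_one, Complex.norm_natCast]
      rw [h1n]
      refine mul_le_mul_of_nonneg_left ?_ (by positivity)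
      refine (norm_sum_le _ _).trans (Finset.sum_le_sum ?_)
      intro j hj
      rw [norm_mul, myexp_abs (-(Real.pi * ((j:ℝ)/(n:ℝ)) * (m:ℝ))) _ (by push_cast; ring),
        mul_one]
    have hsum : ∑ j ∈ Finset.Icc (-(n:ℤ)) ((n:ℤ)-1),
        (L2 + (if j = (n:ℤ)-2 then (n:ℝ) * L1 else 0)) = 2 * (n:ℝ) * L2 + (n:ℝ) * L1 := by
      rw [Finset.sum_add_distrib, Finset.sum_const, hcard, Finset.sum_ite_eq' _ ((n:ℤ)-2),
        if_pos (by rw [Finset.mem_Icc]; omega)]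
      push_cast
      ring
    calc ‖dFourier n (dD n (dD n f)) m‖
        ≤ (1/(n:ℝ)) * ∑ j ∈ Finset.Icc (-(n:ℤ)) ((n:ℤ)-1), ‖dD n (dD n f) j‖ := habs
      _ ≤ (1/(n:ℝ)) * (2 * (n:ℝ) * L2 + (n:ℝ) * L1) := by
          refine mul_le_mul_of_nonneg_left ?_ (by positivity)
          rw [← hsum]
          exact Finset.sum_le_sum key
      _ = 2 * L2 + L1 := by field_simp
      _ ≤ 5 * L1 + 2 * L2 := by linarith
  · -- dF bound
    rw [dF]
    have hE1 : ‖Complex.exp ((Real.pi : ℂ) * Complex.I * (m : ℂ) / (n : ℂ))‖ = 1 :=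
      myexp_abs (Real.pi * (m:ℝ) / (n:ℝ)) _ (by push_cast; ring)
    have hE2 : ‖Complex.exp ((Real.pi : ℂ) * Complex.I * (m : ℂ))‖ = 1 :=
      myexp_abs (Real.pi * (m:ℝ)) _ (by push_cast; ring)
    have hE3 : ‖Complex.exp (-((Real.pi : ℂ) * Complex.I * (((n : ℂ) - 1) / (n : ℂ)) * (m : ℂ)))‖
        = 1 := myexp_abs (-(Real.pi * (((n:ℝ)-1)/(n:ℝ)) * (m:ℝ))) _ (by push_cast; ring)
    have hpsi : ‖dPsi n m‖ ≤ 2 * (n:ℝ) := by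
      rw [dPsi, norm_mul, Complex.norm_natCast]
      have : ‖Complex.exp ((Real.pi : ℂ) * Complex.I * (m : ℂ) / (n : ℂ)) - 1‖ ≤ 2 := by
        refine (norm_sub_le _ _).trans ?_
        rw [hE1, norm_one]; norm_num
      nlinarith
    have hphi : ‖dPhi n m‖ ≤ 2 * (n:ℝ) := by
      rw [dPhi, norm_mul, Complex.norm_natCast]
      have hE1' : ‖Complex.exp (-((Real.pi : ℂ) * Complex.I * (m : ℂ) / (n : ℂ)))‖ = 1 :=
        myexp_abs (-(Real.pi * (m:ℝ) / (n:ℝ))) _ (by push_cast; ring)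
      have : ‖Complex.exp (-((Real.pi : ℂ) * Complex.I * (m : ℂ) / (n : ℂ))) - 1‖ ≤ 2 := by
        refine (norm_sub_le _ _).trans ?_
        rw [hE1', norm_one]; norm_num
      nlinarith
    have hgn : ‖g (((n:ℝ)-1)/(n:ℝ))‖ ≤ L1 * (1/(n:ℝ)) := by
      have hmem1 : ((n:ℝ)-1)/(n:ℝ) ∈ s := by
        rw [hsdef, Set.mem_Icc]
        constructor
        · rw [le_div_iff₀ hnR]; linarith
        · rw [div_le_one hnR]; linarith
      have hmem2 : (1:ℝ) ∈ s := by rw [hsdef, Set.mem_Icc]; constructor <;> norm_num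
      have := lip_g _ hmem2 _ hmem1
      rw [h1, sub_zero] at this
      refine this.trans ?_
      refine mul_le_mul_of_nonneg_left ?_ hL1nn
      rw [Real.norm_eq_abs, show ((n:ℝ)-1)/(n:ℝ) - 1 = -(1/(n:ℝ)) by field_simp; ring, abs_neg,
        abs_of_pos (by positivity)]
    -- term A is zero
    have hA0 : dPsi n m * dPhi n m *
        (-(1 / (n : ℂ)) * g (-1) * Complex.exp ((Real.pi : ℂ) * Complex.I * (m : ℂ) / (n : ℂ)) *
          Complex.exp ((Real.pi : ℂ) * Complex.I * (m : ℂ))) = 0 := by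
      rw [hm1]; ring
    rw [hA0, zero_sub]
    have tB : ‖dPsi n m *
        (g (((n : ℝ) - 1) / (n : ℝ)) *
            Complex.exp (-((Real.pi : ℂ) * Complex.I * (((n : ℂ) - 1) / (n : ℂ)) * (m : ℂ)))
          - g (-1) * Complex.exp ((Real.pi : ℂ) * Complex.I * (m : ℂ)))‖ ≤ 2 * L1 := by
      rw [hm1, zero_mul, sub_zero, norm_mul, norm_mul, hE3, mul_one]
      calc ‖dPsi n m‖ * ‖g (((n:ℝ)-1)/(n:ℝ))‖ ≤ (2 * (n:ℝ)) * (L1 * (1/(n:ℝ))) := by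
            refine mul_le_mul hpsi hgn (norm_nonneg _) (by positivity)
        _ = 2 * L1 := by field_simp
    have tC : ‖dPhi n m *
        (-(1 / (n : ℂ)) * dD n f (-(n : ℤ)) *
          Complex.exp ((Real.pi : ℂ) * Complex.I * (m : ℂ) / (n : ℂ)) *
          Complex.exp ((Real.pi : ℂ) * Complex.I * (m : ℂ)))‖ ≤ 2 * L1 := by
      rw [norm_mul, norm_mul, norm_mul, norm_mul, hE1, hE2, mul_one, mul_one, norm_neg,
        norm_div, norm_one, Complex.norm_natCast]
      calc ‖dPhi n m‖ * (1/(n:ℝ) * ‖dD n f (-(n:ℤ))‖) ≤ (2*(n:ℝ)) * (1/(n:ℝ) * L1) := by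
            refine mul_le_mul hphi ?_ (by positivity) (by positivity)
            exact mul_le_mul_of_nonneg_left hd (by positivity)
        _ = 2 * L1 := by field_simp
    have tD : ‖-(dD n f (-(n : ℤ))) * Complex.exp ((Real.pi : ℂ) * Complex.I * (m : ℂ))‖
        ≤ L1 := by
      rw [norm_mul, hE2, mul_one, norm_neg]
      exact hd
    refine le_trans (norm_sub_le _ _) ?_
    refine le_trans (add_le_add_left (norm_add_le _ _) _) ?_
    rw [norm_neg]
    have := add_le_add (add_le_add tB tC) tD
    linarith
end

section
/- Let g : [-1,1] → ℂ be infinitely differentiable with g(-1) = g(1). For each integer n ≥ 1 let ĝ_n(m) = (1/n)·Σ_{j=-n}^{n-1} g(j/n)·e^{-πi(j/n)m} be the discrete Fourier coefficients of the restriction of g to the grid G_n = {j/n : j ∈ ℤ, -n ≤ j ≤ n-1}. Then there exists a constant H ∈ ℝ such that for all integers n ≥ 1 and all integers m with -n ≤ m ≤ n-1 and m ≠ 0, |ĝ_n(m)| ≤ H/m². -/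
private lemma dfqd_shift (F : ℤ → ℂ) (p a : ℤ) (hF : ∀ j, F (j + p) = F j) (hp : 0 < p) :
    ∑ j ∈ Finset.Icc a (a + p - 1), F j = ∑ j ∈ Finset.Icc (a + 1) (a + p), F j := by
  have h1 : Finset.Icc a (a + p - 1) = insert a (Finset.Icc (a + 1) (a + p - 1)) := by
    ext x; simp only [Finset.mem_Icc, Finset.mem_insert]; omega
  have h2 : Finset.Icc (a + 1) (a + p) = insert (a + p) (Finset.Icc (a + 1) (a + p - 1)) := by
    ext x; simp only [Finset.mem_Icc, Finset.mem_insert]; omega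
  rw [h1, h2, Finset.sum_insert (by simp only [Finset.mem_Icc]; omega),
    Finset.sum_insert (by simp only [Finset.mem_Icc]; omega), hF a]

private lemma dfqd_shift' (F : ℤ → ℂ) (p a b : ℤ) (hF : ∀ j, F (j + p) = F j)
    (hp : 0 < p) (hab : b = a + p - 1) :
    ∑ j ∈ Finset.Icc (a - 1) (b - 1), F j = ∑ j ∈ Finset.Icc a b, F j := by
  subst hab
  have h := dfqd_shift F p (a - 1) hF hp
  have e1 : a - 1 + p - 1 = a + p - 1 - 1 := by ring
  have e2 : a - 1 + 1 = a := by ring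
  have e3 : a - 1 + p = a + p - 1 := by ring
  rw [e1, e2, e3] at h
  exact h

private lemma dfqd_reindex (F : ℤ → ℂ) (a b k : ℤ) :
    ∑ j ∈ Finset.Icc a b, F (j - k) = ∑ j ∈ Finset.Icc (a - k) (b - k), F j := by
  have : Finset.Icc a b = (Finset.Icc (a - k) (b - k)).map (addRightEmbedding k) := by
    rw [Finset.map_add_right_Icc]; congr 1 <;> omega
  rw [this, Finset.sum_map]
  exact Finset.sum_congr rfl fun j _ => by simp [addRightEmbedding]

open intervalIntegral in
private lemma dfqd_ftc (g f1 : ℝ → ℂ)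
    (hcont : ContinuousOn g (Set.Icc (-1) 1))
    (hf1cont : ContinuousOn f1 (Set.Icc (-1) 1))
    (hderiv : ∀ t ∈ Set.Ioo (-1 : ℝ) 1, HasDerivAt g (f1 t) t)
    {u v : ℝ} (hu : -1 ≤ u) (huv : u ≤ v) (hv : v ≤ 1) :
    ∫ t in u..v, f1 t = g v - g u := by
  have hsub : Set.Icc u v ⊆ Set.Icc (-1 : ℝ) 1 := Set.Icc_subset_Icc hu hv
  refine integral_eq_sub_of_hasDeriv_right_of_le huv (hcont.mono hsub) (fun t ht => ?_) ?_
  · exact (hderiv t ⟨lt_of_le_of_lt hu ht.1, lt_of_lt_of_le ht.2 hv⟩).hasDerivWithinAt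
  · exact (hf1cont.mono (by rwa [Set.uIcc_of_le huv])).intervalIntegrable

private lemma dfqd_secdiff (g f1 : ℝ → ℂ) (M2 : ℝ)
    (hcont : ContinuousOn g (Set.Icc (-1) 1))
    (hf1cont : ContinuousOn f1 (Set.Icc (-1) 1))
    (hderiv : ∀ t ∈ Set.Ioo (-1 : ℝ) 1, HasDerivAt g (f1 t) t)
    (hlip : ∀ x ∈ Set.Icc (-1 : ℝ) 1, ∀ y ∈ Set.Icc (-1 : ℝ) 1, ‖f1 y - f1 x‖ ≤ M2 * |y - x|)
    (x δ : ℝ) (hδ : 0 ≤ δ) (hx : -1 ≤ x) (hx2 : x + 2 * δ ≤ 1) :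
    ‖g (x + 2 * δ) - 2 * g (x + δ) + g x‖ ≤ M2 * δ ^ 2 := by
  have hxδ : x + δ ≤ 1 := by linarith
  have e1 : ∫ t in (x + δ)..(x + 2 * δ), f1 t = g (x + 2 * δ) - g (x + δ) :=
    dfqd_ftc g f1 hcont hf1cont hderiv (by linarith) (by linarith) hx2
  have e2 : ∫ t in x..(x + δ), f1 t = g (x + δ) - g x :=
    dfqd_ftc g f1 hcont hf1cont hderiv hx (by linarith) hxδ
  have e3 : ∫ t in x..(x + δ), f1 (t + δ) = ∫ t in (x + δ)..(x + 2 * δ), f1 t := by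
    rw [intervalIntegral.integral_comp_add_right]
    congr 1; ring
  have i1 : IntervalIntegrable f1 MeasureTheory.volume x (x + δ) :=
    (hf1cont.mono (by
      rw [Set.uIcc_of_le (by linarith : x ≤ x + δ)]
      exact Set.Icc_subset_Icc hx (by linarith))).intervalIntegrable
  have i2 : IntervalIntegrable (fun t => f1 (t + δ)) MeasureTheory.volume x (x + δ) := by
    apply ContinuousOn.intervalIntegrable
    rw [Set.uIcc_of_le (by linarith : x ≤ x + δ)]
    exact hf1cont.comp (continuousOn_id.add continuousOn_const)
      (fun t ht => ⟨by linarith [ht.1], by linarith [ht.2]⟩)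
  have e4 : g (x + 2 * δ) - 2 * g (x + δ) + g x
      = ∫ t in x..(x + δ), (f1 (t + δ) - f1 t) := by
    rw [intervalIntegral.integral_sub i2 i1, e3, e1, e2]; ring
  rw [e4]
  have hb : ∀ t ∈ Set.uIoc x (x + δ), ‖f1 (t + δ) - f1 t‖ ≤ M2 * δ := by
    intro t ht
    rw [Set.uIoc_of_le (by linarith : x ≤ x + δ)] at ht
    have h1 : t ∈ Set.Icc (-1 : ℝ) 1 := ⟨by linarith [ht.1], by linarith [ht.2]⟩
    have h2 : t + δ ∈ Set.Icc (-1 : ℝ) 1 := ⟨by linarith [ht.1], by linarith [ht.2]⟩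
    calc ‖f1 (t + δ) - f1 t‖ ≤ M2 * |t + δ - t| := hlip t h1 (t + δ) h2
      _ = M2 * δ := by rw [add_sub_cancel_left, abs_of_nonneg hδ]
  calc ‖∫ t in x..(x + δ), (f1 (t + δ) - f1 t)‖ ≤ M2 * δ * |x + δ - x| :=
        intervalIntegral.norm_integral_le_of_norm_le_const hb
    _ = M2 * δ ^ 2 := by rw [add_sub_cancel_left, abs_of_nonneg hδ]; ring

set_option maxHeartbeats 2000000 in
/-- For a smooth function g on [-1,1] with g(-1) = g(1), the discrete Fourier
coefficients of the restrictions of g to the grids G_n satisfy a uniform quadratic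
decay bound: |ĝ_n(m)| ≤ H/m² for all n ≥ 1 and all m ≠ 0 with -n ≤ m ≤ n-1. -/
theorem discrete_fourier_quadratic_decay
    (g : ℝ → ℂ) (hg : ContDiffOn ℝ (⊤ : ℕ∞) g (Set.Icc (-1) 1)) (hper : g (-1) = g 1) :
    ∃ H : ℝ, ∀ n : ℕ, 1 ≤ n → ∀ m : ℤ, -(n : ℤ) ≤ m → m ≤ (n : ℤ) - 1 → m ≠ 0 →
      ‖(1 / (n : ℂ)) * ∑ j ∈ Finset.Icc (-(n : ℤ)) ((n : ℤ) - 1),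
          g ((j : ℝ) / (n : ℝ)) *
            Complex.exp (-((Real.pi : ℂ) * Complex.I * ((j : ℂ) / (n : ℂ)) * (m : ℂ)))‖
        ≤ H / (m : ℝ) ^ 2 := by
  classical
  have hud : UniqueDiffOn ℝ (Set.Icc (-1 : ℝ) 1) := uniqueDiffOn_Icc (by norm_num)
  set f1 : ℝ → ℂ := derivWithin g (Set.Icc (-1 : ℝ) 1) with hf1
  have hgf1 : ContDiffOn ℝ (⊤ : ℕ∞) f1 (Set.Icc (-1 : ℝ) 1) := hg.derivWithin hud (by simp)
  obtain ⟨M1, hM1⟩ := isCompact_Icc.exists_bound_of_continuousOn hgf1.continuousOn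
  obtain ⟨M2, hM2⟩ :=
    isCompact_Icc.exists_bound_of_continuousOn (hgf1.derivWithin (m := (⊤ : ℕ∞)) hud (by simp)).continuousOn
  set M1' : ℝ := max M1 0 with hM1'def
  set M2' : ℝ := max M2 0 with hM2'def
  have hM1'0 : 0 ≤ M1' := le_max_right _ _
  have hM2'0 : 0 ≤ M2' := le_max_right _ _
  have hlipg : ∀ x ∈ Set.Icc (-1 : ℝ) 1, ∀ y ∈ Set.Icc (-1 : ℝ) 1,
      ‖g y - g x‖ ≤ M1' * |y - x| := by
    intro x hx y hy
    have := Convex.norm_image_sub_le_of_norm_derivWithin_le (C := M1')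
      (hg.differentiableOn (by simp))
      (fun z hz => (hM1 z hz).trans (le_max_left _ _)) (convex_Icc _ _) hx hy
    simpa [Real.norm_eq_abs] using this
  have hlipf1 : ∀ x ∈ Set.Icc (-1 : ℝ) 1, ∀ y ∈ Set.Icc (-1 : ℝ) 1,
      ‖f1 y - f1 x‖ ≤ M2' * |y - x| := by
    intro x hx y hy
    have := Convex.norm_image_sub_le_of_norm_derivWithin_le (C := M2')
      (hgf1.differentiableOn (by simp))
      (fun z hz => (hM2 z hz).trans (le_max_left _ _)) (convex_Icc _ _) hx hy
    simpa [Real.norm_eq_abs] using this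
  have hderiv : ∀ t ∈ Set.Ioo (-1 : ℝ) 1, HasDerivAt g (f1 t) t := by
    intro t ht
    have hmem : Set.Icc (-1 : ℝ) 1 ∈ nhds t := Icc_mem_nhds ht.1 ht.2
    have hd : DifferentiableAt ℝ g t := (hg.contDiffAt hmem).differentiableAt (by simp)
    have hfd : f1 t = deriv g t := derivWithin_of_mem_nhds hmem
    rw [hfd]
    exact hd.hasDerivAt
  have hsecd : ∀ x δ : ℝ, 0 ≤ δ → -1 ≤ x → x + 2 * δ ≤ 1 →
      ‖g (x + 2 * δ) - 2 * g (x + δ) + g x‖ ≤ M2' * δ ^ 2 :=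
    fun x δ hδ hx hx2 =>
      dfqd_secdiff g f1 M2' hg.continuousOn hgf1.continuousOn hderiv hlipf1 x δ hδ hx hx2
  refine ⟨M1' + M2', ?_⟩
  intro n hn m hm1 hm2 hm0
  have hn0 : (0 : ℝ) < (n : ℝ) := by exact_mod_cast Nat.lt_of_lt_of_le Nat.zero_lt_one hn
  have hnR : (1 : ℝ) ≤ (n : ℝ) := by exact_mod_cast hn
  have hnne : ((n : ℝ)) ≠ 0 := ne_of_gt hn0
  have hnCne : ((n : ℂ)) ≠ 0 := by
    simpa using (Nat.cast_ne_zero (R := ℂ)).mpr (by omega : n ≠ 0)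
  set θ : ℝ := -(Real.pi * (m : ℝ)) / (n : ℝ) with hθ
  set ω : ℂ := Complex.exp ((θ : ℂ) * Complex.I) with hω
  have hωne : ω ≠ 0 := Complex.exp_ne_zero _
  have hnZ : (1 : ℤ) ≤ (n : ℤ) := by exact_mod_cast hn
  have hemod : ∀ a k c : ℤ, 0 ≤ k → k < 2 * (n : ℤ) → a = k + 2 * (n : ℤ) * c →
      a % (2 * (n : ℤ)) = k := by
    intro a k c h0 h1 hac
    subst hac
    rw [Int.add_mul_emod_self_left, Int.emod_eq_of_lt h0 h1]
  set H : ℤ → ℂ := fun j => g (((j + (n : ℤ)) % (2 * (n : ℤ)) - (n : ℤ) : ℤ) / (n : ℝ)) with hH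
  have Hval : ∀ j k : ℤ, (j + (n : ℤ)) % (2 * (n : ℤ)) - (n : ℤ) = k →
      H j = g ((k : ℝ) / (n : ℝ)) := by
    intro j k hk
    simp only [hH, hk]
  have Hper : ∀ j : ℤ, H (j + 2 * (n : ℤ)) = H j := by
    intro j
    have h : (j + 2 * (n : ℤ) + (n : ℤ)) % (2 * (n : ℤ)) - (n : ℤ)
        = (j + (n : ℤ)) % (2 * (n : ℤ)) - (n : ℤ) := by
      rw [show j + 2 * (n : ℤ) + (n : ℤ) = j + (n : ℤ) + 2 * (n : ℤ) * 1 by ring,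
        Int.add_mul_emod_self_left]
    simp only [hH]
    rw [h]
  have hω2n : ω ^ (2 * (n : ℤ)) = 1 := by
    rw [hω, ← Complex.exp_int_mul]
    have he : ((2 * (n : ℤ) : ℤ) : ℂ) * ((θ : ℂ) * Complex.I)
        = ((-m : ℤ) : ℂ) * (2 * (Real.pi : ℂ) * Complex.I) := by
      rw [hθ]
      push_cast
      field_simp
    rw [he, Complex.exp_int_mul_two_pi_mul_I]
  set F : ℤ → ℂ := fun j => H j * ω ^ j with hFdef
  have hFper : ∀ j : ℤ, F (j + 2 * (n : ℤ)) = F j := by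
    intro j
    simp only [hFdef]
    rw [Hper j, zpow_add₀ hωne, hω2n, mul_one]
  have hp2n : (0 : ℤ) < 2 * (n : ℤ) := by omega
  set S : ℂ := ∑ j ∈ Finset.Icc (-(n : ℤ)) ((n : ℤ) - 1), F j with hSdef
  have hshiftF1 : ∑ j ∈ Finset.Icc (-(n : ℤ)) ((n : ℤ) - 1), F (j - 1) = S := by
    rw [dfqd_reindex F _ _ 1]
    exact dfqd_shift' F (2 * (n : ℤ)) (-(n : ℤ)) ((n : ℤ) - 1) hFper hp2n (by ring)
  have hshiftF2 : ∑ j ∈ Finset.Icc (-(n : ℤ)) ((n : ℤ) - 1), F (j - 2) = S := by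
    rw [dfqd_reindex F _ _ 2]
    have h1 := dfqd_shift' F (2 * (n : ℤ)) (-(n : ℤ) - 1) ((n : ℤ) - 1 - 1) hFper hp2n (by ring)
    have h2 := dfqd_shift' F (2 * (n : ℤ)) (-(n : ℤ)) ((n : ℤ) - 1) hFper hp2n (by ring)
    have e : Finset.Icc (-(n : ℤ) - 2) ((n : ℤ) - 1 - 2)
        = Finset.Icc (-(n : ℤ) - 1 - 1) ((n : ℤ) - 1 - 1 - 1) := by congr 1 <;> ring
    rw [e, h1, h2]
  have hs1 : ∑ j ∈ Finset.Icc (-(n : ℤ)) ((n : ℤ) - 1), H (j - 1) * ω ^ j = ω * S := by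
    calc ∑ j ∈ Finset.Icc (-(n : ℤ)) ((n : ℤ) - 1), H (j - 1) * ω ^ j
        = ∑ j ∈ Finset.Icc (-(n : ℤ)) ((n : ℤ) - 1), ω * F (j - 1) := by
          refine Finset.sum_congr rfl fun j _ => ?_
          have hzp : ω ^ j = ω ^ (j - 1) * ω := by
            rw [← zpow_add_one₀ hωne, sub_add_cancel]
          rw [hzp]
          simp only [hFdef]
          ring
      _ = ω * ∑ j ∈ Finset.Icc (-(n : ℤ)) ((n : ℤ) - 1), F (j - 1) := by rw [Finset.mul_sum]
      _ = ω * S := by rw [hshiftF1]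
  have hs2 : ∑ j ∈ Finset.Icc (-(n : ℤ)) ((n : ℤ) - 1), H (j - 2) * ω ^ j = ω * (ω * S) := by
    calc ∑ j ∈ Finset.Icc (-(n : ℤ)) ((n : ℤ) - 1), H (j - 2) * ω ^ j
        = ∑ j ∈ Finset.Icc (-(n : ℤ)) ((n : ℤ) - 1), ω * (ω * F (j - 2)) := by
          refine Finset.sum_congr rfl fun j _ => ?_
          have hzp : ω ^ j = ω ^ (j - 2) * ω * ω := by
            rw [← zpow_add_one₀ hωne, ← zpow_add_one₀ hωne,
              show j - 2 + 1 + 1 = j by ring]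
          rw [hzp]
          simp only [hFdef]
          ring
      _ = ω * (ω * ∑ j ∈ Finset.Icc (-(n : ℤ)) ((n : ℤ) - 1), F (j - 2)) := by
          rw [Finset.mul_sum, Finset.mul_sum]
      _ = ω * (ω * S) := by rw [hshiftF2]
  have hkey : (1 - ω) * (1 - ω) * S
      = ∑ j ∈ Finset.Icc (-(n : ℤ)) ((n : ℤ) - 1),
          (H j - 2 * H (j - 1) + H (j - 2)) * ω ^ j := by
    have expand : ∑ j ∈ Finset.Icc (-(n : ℤ)) ((n : ℤ) - 1),
        (H j - 2 * H (j - 1) + H (j - 2)) * ω ^ j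
        = S - 2 * (ω * S) + ω * (ω * S) := by
      calc ∑ j ∈ Finset.Icc (-(n : ℤ)) ((n : ℤ) - 1),
            (H j - 2 * H (j - 1) + H (j - 2)) * ω ^ j
          = ∑ j ∈ Finset.Icc (-(n : ℤ)) ((n : ℤ) - 1),
            (H j * ω ^ j - 2 * (H (j - 1) * ω ^ j) + H (j - 2) * ω ^ j) := by
            refine Finset.sum_congr rfl fun j _ => by ring
        _ = ∑ j ∈ Finset.Icc (-(n : ℤ)) ((n : ℤ) - 1), H j * ω ^ j
            - 2 * ∑ j ∈ Finset.Icc (-(n : ℤ)) ((n : ℤ) - 1), H (j - 1) * ω ^ j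
            + ∑ j ∈ Finset.Icc (-(n : ℤ)) ((n : ℤ) - 1), H (j - 2) * ω ^ j := by
            rw [Finset.sum_add_distrib, Finset.sum_sub_distrib, ← Finset.mul_sum]
        _ = S - 2 * (ω * S) + ω * (ω * S) := by
            rw [hs1, hs2]
    rw [expand]
    ring
  -- pointwise second-difference bounds
  have hΔ : ∀ j ∈ Finset.Icc (-(n : ℤ)) ((n : ℤ) - 1),
      ‖H j - 2 * H (j - 1) + H (j - 2)‖
        ≤ M2' / (n : ℝ) ^ 2 + (if j = 1 - (n : ℤ) then 2 * M1' / (n : ℝ) else 0) := by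
    intro j hj
    rw [Finset.mem_Icc] at hj
    by_cases hc1 : j = 1 - (n : ℤ)
    · rw [if_pos hc1]
      subst hc1
      have e0 : H (1 - (n : ℤ)) = g (((1 - (n : ℤ) : ℤ) : ℝ) / (n : ℝ)) := Hval _ _ (by
        rw [hemod (1 - (n : ℤ) + (n : ℤ)) 1 0 (by omega) (by omega) (by ring)] <;> omega)
      have e1 : H (1 - (n : ℤ) - 1) = g (((-(n : ℤ) : ℤ) : ℝ) / (n : ℝ)) := Hval _ _ (by
        rw [hemod (1 - (n : ℤ) - 1 + (n : ℤ)) 0 0 (by omega) (by omega) (by ring)] <;> omega)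
      have e2 : H (1 - (n : ℤ) - 2) = g ((((n : ℤ) - 1 : ℤ) : ℝ) / (n : ℝ)) := Hval _ _ (by
        rw [hemod (1 - (n : ℤ) - 2 + (n : ℤ)) (2 * (n : ℤ) - 1) (-1) (by omega) (by omega)
          (by ring)] <;> omega)
      have a0 : ((1 - (n : ℤ) : ℤ) : ℝ) / (n : ℝ) = (1 - (n : ℝ)) / (n : ℝ) := by push_cast; ring
      have a1 : ((-(n : ℤ) : ℤ) : ℝ) / (n : ℝ) = -1 := by push_cast; field_simp
      have a2 : (((n : ℤ) - 1 : ℤ) : ℝ) / (n : ℝ) = ((n : ℝ) - 1) / (n : ℝ) := by push_cast; ring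
      rw [e0, e1, e2, a0, a1, a2]
      have hsplit : g ((1 - (n : ℝ)) / (n : ℝ)) - 2 * g (-1) + g (((n : ℝ) - 1) / (n : ℝ))
          = (g ((1 - (n : ℝ)) / (n : ℝ)) - g (-1)) + (g (((n : ℝ) - 1) / (n : ℝ)) - g 1) := by
        rw [← hper]; ring
      rw [hsplit]
      have hmem1 : (1 - (n : ℝ)) / (n : ℝ) ∈ Set.Icc (-1 : ℝ) 1 := by
        constructor
        · rw [le_div_iff₀ hn0]; linarith
        · rw [div_le_one hn0]; linarith
      have hmem2 : ((n : ℝ) - 1) / (n : ℝ) ∈ Set.Icc (-1 : ℝ) 1 := by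
        constructor
        · rw [le_div_iff₀ hn0]; linarith
        · rw [div_le_one hn0]; linarith
      have hmemm1 : (-1 : ℝ) ∈ Set.Icc (-1 : ℝ) 1 := by constructor <;> norm_num
      have hmem1' : (1 : ℝ) ∈ Set.Icc (-1 : ℝ) 1 := by constructor <;> norm_num
      have hb1 := hlipg (-1) hmemm1 ((1 - (n : ℝ)) / (n : ℝ)) hmem1
      have hb2 := hlipg 1 hmem1' (((n : ℝ) - 1) / (n : ℝ)) hmem2
      have hd1 : (1 - (n : ℝ)) / (n : ℝ) - (-1) = 1 / (n : ℝ) := by field_simp; ring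
      have hd2 : ((n : ℝ) - 1) / (n : ℝ) - 1 = -(1 / (n : ℝ)) := by field_simp <;> ring
      rw [hd1] at hb1
      rw [hd2, abs_neg] at hb2
      have habs1n : |1 / (n : ℝ)| = 1 / (n : ℝ) := abs_of_nonneg (by positivity)
      rw [habs1n] at hb1 hb2
      have hM2nn : 0 ≤ M2' / (n : ℝ) ^ 2 := by positivity
      calc ‖(g ((1 - (n : ℝ)) / (n : ℝ)) - g (-1)) + (g (((n : ℝ) - 1) / (n : ℝ)) - g 1)‖
          ≤ ‖g ((1 - (n : ℝ)) / (n : ℝ)) - g (-1)‖ + ‖g (((n : ℝ) - 1) / (n : ℝ)) - g 1‖ :=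
            norm_add_le _ _
        _ ≤ M1' * (1 / (n : ℝ)) + M1' * (1 / (n : ℝ)) := add_le_add hb1 hb2
        _ ≤ M2' / (n : ℝ) ^ 2 + 2 * M1' / (n : ℝ) := by
            have : M1' * (1 / (n : ℝ)) + M1' * (1 / (n : ℝ)) = 2 * M1' / (n : ℝ) := by ring
            linarith
    · rw [if_neg hc1, add_zero]
      by_cases hc2 : j = -(n : ℤ)
      · subst hc2
        have e0 : H (-(n : ℤ)) = g (((-(n : ℤ) : ℤ) : ℝ) / (n : ℝ)) := Hval _ _ (by
          rw [hemod (-(n : ℤ) + (n : ℤ)) 0 0 (by omega) (by omega) (by ring)] <;> omega)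
        have e1 : H (-(n : ℤ) - 1) = g ((((n : ℤ) - 1 : ℤ) : ℝ) / (n : ℝ)) := Hval _ _ (by
          rw [hemod (-(n : ℤ) - 1 + (n : ℤ)) (2 * (n : ℤ) - 1) (-1) (by omega) (by omega)
            (by ring)] <;> omega)
        have e2 : H (-(n : ℤ) - 2) = g ((((n : ℤ) - 2 : ℤ) : ℝ) / (n : ℝ)) := Hval _ _ (by
          rw [hemod (-(n : ℤ) - 2 + (n : ℤ)) (2 * (n : ℤ) - 2) (-1) (by omega) (by omega)
            (by ring)] <;> omega)
        have a0 : ((-(n : ℤ) : ℤ) : ℝ) / (n : ℝ) = -1 := by push_cast; field_simp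
        have a1 : (((n : ℤ) - 1 : ℤ) : ℝ) / (n : ℝ) = ((n : ℝ) - 1) / (n : ℝ) := by
          push_cast; ring
        have a2 : (((n : ℤ) - 2 : ℤ) : ℝ) / (n : ℝ) = ((n : ℝ) - 2) / (n : ℝ) := by
          push_cast; ring
        rw [e0, e1, e2, a0, a1, a2, hper]
        have hb := hsecd (((n : ℝ) - 2) / (n : ℝ)) (1 / (n : ℝ)) (by positivity)
          (by rw [le_div_iff₀ hn0]; linarith)
          (le_of_eq (by field_simp; ring : ((n : ℝ) - 2) / (n : ℝ) + 2 * (1 / (n : ℝ)) = 1))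
        rw [show ((n : ℝ) - 2) / (n : ℝ) + 2 * (1 / (n : ℝ)) = 1 by field_simp; ring,
          show ((n : ℝ) - 2) / (n : ℝ) + 1 / (n : ℝ) = ((n : ℝ) - 1) / (n : ℝ) by ring] at hb
        calc ‖g 1 - 2 * g (((n : ℝ) - 1) / (n : ℝ)) + g (((n : ℝ) - 2) / (n : ℝ))‖
            ≤ M2' * (1 / (n : ℝ)) ^ 2 := hb
          _ = M2' / (n : ℝ) ^ 2 := by field_simp
      · have hj3 : 2 - (n : ℤ) ≤ j := by omega
        have e0 : H j = g ((j : ℝ) / (n : ℝ)) := Hval _ _ (by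
          rw [hemod (j + (n : ℤ)) (j + (n : ℤ)) 0 (by omega) (by omega) (by ring)] <;> omega)
        have e1 : H (j - 1) = g (((j - 1 : ℤ) : ℝ) / (n : ℝ)) := Hval _ _ (by
          rw [hemod (j - 1 + (n : ℤ)) (j - 1 + (n : ℤ)) 0 (by omega) (by omega) (by ring)] <;> omega)
        have e2 : H (j - 2) = g (((j - 2 : ℤ) : ℝ) / (n : ℝ)) := Hval _ _ (by
          rw [hemod (j - 2 + (n : ℤ)) (j - 2 + (n : ℤ)) 0 (by omega) (by omega) (by ring)] <;> omega)
        have a1 : ((j - 1 : ℤ) : ℝ) / (n : ℝ) = ((j : ℝ) - 1) / (n : ℝ) := by push_cast; ring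
        have a2 : ((j - 2 : ℤ) : ℝ) / (n : ℝ) = ((j : ℝ) - 2) / (n : ℝ) := by push_cast; ring
        rw [e0, e1, e2, a1, a2]
        have hjR1 : (2 : ℝ) - (n : ℝ) ≤ (j : ℝ) := by exact_mod_cast hj3
        have hjR2 : (j : ℝ) ≤ (n : ℝ) - 1 := by exact_mod_cast hj.2
        have hb := hsecd (((j : ℝ) - 2) / (n : ℝ)) (1 / (n : ℝ)) (by positivity)
          (by rw [le_div_iff₀ hn0]; linarith)
          (by
            rw [show ((j : ℝ) - 2) / (n : ℝ) + 2 * (1 / (n : ℝ)) = (j : ℝ) / (n : ℝ) by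
              field_simp <;> ring]
            rw [div_le_one hn0]; linarith)
        rw [show ((j : ℝ) - 2) / (n : ℝ) + 2 * (1 / (n : ℝ)) = (j : ℝ) / (n : ℝ) by
            field_simp <;> ring,
          show ((j : ℝ) - 2) / (n : ℝ) + 1 / (n : ℝ) = ((j : ℝ) - 1) / (n : ℝ) by ring] at hb
        calc ‖g ((j : ℝ) / (n : ℝ)) - 2 * g (((j : ℝ) - 1) / (n : ℝ))
              + g (((j : ℝ) - 2) / (n : ℝ))‖
            ≤ M2' * (1 / (n : ℝ)) ^ 2 := hb
          _ = M2' / (n : ℝ) ^ 2 := by field_simp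
  -- summing the bounds
  have hmemI : 1 - (n : ℤ) ∈ Finset.Icc (-(n : ℤ)) ((n : ℤ) - 1) := by
    rw [Finset.mem_Icc]; omega
  have hcard : (Finset.Icc (-(n : ℤ)) ((n : ℤ) - 1)).card = 2 * n := by
    rw [Int.card_Icc]; omega
  have habs1 : ‖(1 - ω) * (1 - ω) * S‖ ≤ 2 * M2' / (n : ℝ) + 2 * M1' / (n : ℝ) := by
    rw [hkey]
    refine le_trans (norm_sum_le _ _) ?_
    have hone : ∀ j : ℤ, ‖(H j - 2 * H (j - 1) + H (j - 2)) * ω ^ j‖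
        = ‖H j - 2 * H (j - 1) + H (j - 2)‖ := by
      intro j
      have hωnorm : ‖ω‖ = 1 := by
        rw [hω, Complex.norm_exp_ofReal_mul_I]
      rw [norm_mul, norm_zpow, hωnorm, one_zpow, mul_one]
    calc ∑ j ∈ Finset.Icc (-(n : ℤ)) ((n : ℤ) - 1),
          ‖(H j - 2 * H (j - 1) + H (j - 2)) * ω ^ j‖
        = ∑ j ∈ Finset.Icc (-(n : ℤ)) ((n : ℤ) - 1), ‖H j - 2 * H (j - 1) + H (j - 2)‖ :=
          Finset.sum_congr rfl fun j _ => hone j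
      _ ≤ ∑ j ∈ Finset.Icc (-(n : ℤ)) ((n : ℤ) - 1),
          (M2' / (n : ℝ) ^ 2 + (if j = 1 - (n : ℤ) then 2 * M1' / (n : ℝ) else 0)) :=
          Finset.sum_le_sum hΔ
      _ = (Finset.Icc (-(n : ℤ)) ((n : ℤ) - 1)).card • (M2' / (n : ℝ) ^ 2)
          + 2 * M1' / (n : ℝ) := by
          rw [Finset.sum_add_distrib, Finset.sum_const,
            Finset.sum_ite_eq' _ (1 - (n : ℤ)) (fun _ => 2 * M1' / (n : ℝ)), if_pos hmemI]
      _ = 2 * M2' / (n : ℝ) + 2 * M1' / (n : ℝ) := by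
          rw [hcard, nsmul_eq_mul]
          push_cast
          field_simp
  -- lower bound on |1 - ω|
  have hωeq : ω = ((Real.cos θ : ℝ) : ℂ) + ((Real.sin θ : ℝ) : ℂ) * Complex.I := by
    rw [hω, Complex.exp_mul_I, Complex.ofReal_cos, Complex.ofReal_sin]
  have hnormsq : ‖1 - ω‖ * ‖1 - ω‖ = 2 - 2 * Real.cos θ := by
    have h1 : ‖1 - ω‖ * ‖1 - ω‖ = Complex.normSq (1 - ω) := by
      rw [Complex.normSq_eq_norm_sq]
      ring
    have hre : (1 - ω).re = 1 - Real.cos θ := by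
      rw [hωeq]; simp [Complex.cos_ofReal_re, Complex.sin_ofReal_re]
    have him : (1 - ω).im = -Real.sin θ := by
      rw [hωeq]; simp [Complex.cos_ofReal_im, Complex.sin_ofReal_im, Complex.sin_ofReal_re, Complex.cos_ofReal_re]
    rw [h1, Complex.normSq_apply, hre, him]
    linear_combination Real.sin_sq_add_cos_sq θ
  have hmlowR : -(n : ℝ) ≤ (m : ℝ) := by exact_mod_cast hm1
  have hmhighR : (m : ℝ) ≤ (n : ℝ) := by exact_mod_cast (by omega : m ≤ (n : ℤ))
  have hθabs : |θ| ≤ Real.pi := by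
    rw [abs_le]
    constructor
    · rw [hθ, le_div_iff₀ hn0]
      nlinarith [Real.pi_pos.le, mul_nonneg (sub_nonneg.2 hmhighR) Real.pi_pos.le]
    · rw [hθ, div_le_iff₀ hn0]
      nlinarith [Real.pi_pos.le, mul_nonneg (sub_nonneg.2 (neg_le.1 hmlowR)) Real.pi_pos.le]
  have hcos := Real.cos_le_one_sub_mul_cos_sq hθabs
  have hθsqn : 2 / Real.pi ^ 2 * θ ^ 2 * (n : ℝ) ^ 2 = 2 * (m : ℝ) ^ 2 := by
    rw [hθ]
    have hpine : Real.pi ≠ 0 := Real.pi_ne_zero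
    field_simp
  have hlow : 4 * (m : ℝ) ^ 2 ≤ (‖1 - ω‖ * ‖1 - ω‖) * (n : ℝ) ^ 2 := by
    rw [hnormsq]
    have h10 : (0 : ℝ) ≤ (2 - 2 * Real.cos θ - 2 * (2 / Real.pi ^ 2 * θ ^ 2)) * (n : ℝ) ^ 2 :=
      mul_nonneg (by linarith) (sq_nonneg _)
    calc 4 * (m : ℝ) ^ 2 = 2 * (2 / Real.pi ^ 2 * θ ^ 2 * (n : ℝ) ^ 2) := by
          rw [hθsqn]; ring
      _ ≤ (2 - 2 * Real.cos θ) * (n : ℝ) ^ 2 := by linarith [h10]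
  -- assemble
  have hterm : ∀ j ∈ Finset.Icc (-(n : ℤ)) ((n : ℤ) - 1),
      g ((j : ℝ) / (n : ℝ)) *
        Complex.exp (-((Real.pi : ℂ) * Complex.I * ((j : ℂ) / (n : ℂ)) * (m : ℂ)))
      = F j := by
    intro j hj
    rw [Finset.mem_Icc] at hj
    have h1 : H j = g ((j : ℝ) / (n : ℝ)) := Hval _ _ (by
      rw [hemod (j + (n : ℤ)) (j + (n : ℤ)) 0 (by omega) (by omega) (by ring)] <;> omega)
    have h2 : ω ^ j = Complex.exp ((j : ℂ) * ((θ : ℂ) * Complex.I)) := by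
      rw [hω, ← Complex.exp_int_mul]
    simp only [hFdef]
    rw [h1, h2]
    congr 1
    rw [hθ]
    push_cast
    field_simp
  have hsum_eq : ∑ j ∈ Finset.Icc (-(n : ℤ)) ((n : ℤ) - 1),
      g ((j : ℝ) / (n : ℝ)) *
        Complex.exp (-((Real.pi : ℂ) * Complex.I * ((j : ℂ) / (n : ℂ)) * (m : ℂ))) = S :=
    (Finset.sum_congr rfl hterm).trans hSdef.symm
  rw [hsum_eq, norm_mul, norm_div, norm_one, Complex.norm_natCast]
  have hA0 : 0 ≤ ‖S‖ := norm_nonneg _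
  have hmR0 : ((m : ℝ)) ≠ 0 := Int.cast_ne_zero.mpr hm0
  have hm2pos : (0 : ℝ) < (m : ℝ) ^ 2 := by positivity
  rw [one_div_mul_eq_div, div_le_div_iff₀ hn0 hm2pos]
  have h6 : ‖1 - ω‖ * ‖1 - ω‖ * ‖S‖ ≤ 2 * M2' / (n : ℝ) + 2 * M1' / (n : ℝ) := by
    rw [← norm_mul, ← norm_mul]
    exact habs1
  have h7 : (2 * M2' / (n : ℝ) + 2 * M1' / (n : ℝ)) * (n : ℝ) ^ 2
      = (2 * M2' + 2 * M1') * (n : ℝ) := by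
    field_simp
  have h8 : 4 * (m : ℝ) ^ 2 * ‖S‖ ≤ (2 * M2' + 2 * M1') * (n : ℝ) := by
    calc 4 * (m : ℝ) ^ 2 * ‖S‖ ≤ ((‖1 - ω‖ * ‖1 - ω‖) * (n : ℝ) ^ 2) * ‖S‖ :=
          mul_le_mul_of_nonneg_right hlow hA0
      _ = (‖1 - ω‖ * ‖1 - ω‖ * ‖S‖) * (n : ℝ) ^ 2 := by ring
      _ ≤ (2 * M2' / (n : ℝ) + 2 * M1' / (n : ℝ)) * (n : ℝ) ^ 2 :=
          mul_le_mul_of_nonneg_right h6 (sq_nonneg _)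
      _ = (2 * M2' + 2 * M1') * (n : ℝ) := h7
  nlinarith [h8, mul_nonneg (add_nonneg hM1'0 hM2'0) hn0.le]
end

section
/- Let g : [-1,1] → ℂ be infinitely differentiable with g(-1) = g(1), and for n ≥ 1 let ĝ_n(m) = (1/n)·Σ_{j=-n}^{n-1} g(j/n)·e^{-πi(j/n)m}. Then for every standard real ε > 0 there exists N(ε) ∈ ℕ such that for all integers n > N(ε) and all integers a, b with N(ε) < a ≤ b ≤ n, the sum of |ĝ_n(m')| over those m' with -n ≤ m' ≤ n-1 and a ≤ m' ≤ b is less than ε, and the sum of |ĝ_n(m')| over those m' with -n ≤ m' ≤ n-1 and -b ≤ m' ≤ -a is less than ε. -/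
open Finset in
/-- shift lemma -/
lemma dft_shift_sum (n : ℕ) (F : ℤ → ℂ) (hF : ∀ j, F (j + 2*n) = F j) :
    ∑ j ∈ Finset.Icc (-(n:ℤ)) ((n:ℤ)-1), F (j+1)
      = ∑ j ∈ Finset.Icc (-(n:ℤ)) ((n:ℤ)-1), F j := by
  rcases Nat.eq_zero_or_pos n with h0 | hn
  · subst h0; simp
  have hn1 : (1:ℤ) ≤ n := by exact_mod_cast hn
  have e1 : ∑ j ∈ Finset.Icc (-(n:ℤ)) ((n:ℤ)-1), F (j+1)
      = ∑ j ∈ Finset.Icc (-(n:ℤ)+1) ((n:ℤ)), F j := by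
    rw [show Finset.Icc (-(n:ℤ)+1) ((n:ℤ)) =
        (Finset.Icc (-(n:ℤ)) ((n:ℤ)-1)).map (addRightEmbedding 1) by
      rw [Finset.map_add_right_Icc]; congr 1; ring]
    rw [Finset.sum_map]
    rfl
  rw [e1]
  have e2 : Finset.Icc (-(n:ℤ)+1) ((n:ℤ)) = insert (n:ℤ) (Finset.Icc (-(n:ℤ)+1) ((n:ℤ)-1)) := by
    ext x; simp only [Finset.mem_Icc, Finset.mem_insert]; omega
  have e3 : Finset.Icc (-(n:ℤ)) ((n:ℤ)-1) = insert (-(n:ℤ)) (Finset.Icc (-(n:ℤ)+1) ((n:ℤ)-1)) := by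
    ext x; simp only [Finset.mem_Icc, Finset.mem_insert]; omega
  rw [e2, e3, Finset.sum_insert (by simp only [Finset.mem_Icc]; omega), Finset.sum_insert (by simp only [Finset.mem_Icc]; omega)]
  have : F (n:ℤ) = F (-(n:ℤ)) := by
    have := hF (-(n:ℤ)); rw [show -(n:ℤ) + 2*n = (n:ℤ) by ring] at this; exact this
  rw [this]

/-- Abel summation by parts for periodic sequences -/
lemma dft_abel (n : ℕ) (c : ℂ) (hc0 : c ≠ 0) (hc : c ^ (2*(n:ℤ)) = 1)
    (A : ℤ → ℂ) (hA : ∀ j, A (j + 2*n) = A j) :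
    ∑ j ∈ Finset.Icc (-(n:ℤ)) ((n:ℤ)-1), (A (j+1) - A j) * c ^ j
      = (c⁻¹ - 1) * ∑ j ∈ Finset.Icc (-(n:ℤ)) ((n:ℤ)-1), A j * c ^ j := by
  have hFper : ∀ j : ℤ, A (j + 2*n) * c ^ (j + 2*n) = A j * c ^ j := by
    intro j
    rw [hA, zpow_add₀ hc0, hc, mul_one]
  have key : ∑ j ∈ Finset.Icc (-(n:ℤ)) ((n:ℤ)-1), A (j+1) * c ^ j
      = c⁻¹ * ∑ j ∈ Finset.Icc (-(n:ℤ)) ((n:ℤ)-1), A j * c ^ j := by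
    have e1 : ∀ j : ℤ, A (j+1) * c ^ j = c⁻¹ * (A (j+1) * c ^ (j+1)) := by
      intro j
      rw [zpow_add_one₀ hc0]
      field_simp
    calc ∑ j ∈ Finset.Icc (-(n:ℤ)) ((n:ℤ)-1), A (j+1) * c ^ j
        = ∑ j ∈ Finset.Icc (-(n:ℤ)) ((n:ℤ)-1), c⁻¹ * (A (j+1) * c ^ (j+1)) := by
          exact Finset.sum_congr rfl fun j _ => e1 j
      _ = c⁻¹ * ∑ j ∈ Finset.Icc (-(n:ℤ)) ((n:ℤ)-1), A (j+1) * c ^ (j+1) := by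
          rw [Finset.mul_sum]
      _ = c⁻¹ * ∑ j ∈ Finset.Icc (-(n:ℤ)) ((n:ℤ)-1), A j * c ^ j := by
          rw [dft_shift_sum n (fun j => A j * c ^ j) hFper]
  calc ∑ j ∈ Finset.Icc (-(n:ℤ)) ((n:ℤ)-1), (A (j+1) - A j) * c ^ j
      = (∑ j ∈ Finset.Icc (-(n:ℤ)) ((n:ℤ)-1), A (j+1) * c ^ j)
        - ∑ j ∈ Finset.Icc (-(n:ℤ)) ((n:ℤ)-1), A j * c ^ j := by
        rw [← Finset.sum_sub_distrib]; exact Finset.sum_congr rfl fun j _ => by ring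
    _ = (c⁻¹ - 1) * ∑ j ∈ Finset.Icc (-(n:ℤ)) ((n:ℤ)-1), A j * c ^ j := by
        rw [key]; ring

/-- |1 - e^{iθ}| = 2|sin(θ/2)| -/
lemma abs_one_sub_exp_mul_I (θ : ℝ) :
    ‖1 - Complex.exp (θ * Complex.I)‖ = 2 * |Real.sin (θ/2)| := by
  have hrw : 1 - Complex.exp (θ * Complex.I)
      = ((1 - Real.cos θ : ℝ) : ℂ) + ((-Real.sin θ : ℝ) : ℂ) * Complex.I := by
    rw [Complex.exp_mul_I]
    push_cast
    ring
  have hc : Real.cos θ = Real.cos (θ/2)^2 - Real.sin (θ/2)^2 := by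
    rw [← Real.cos_two_mul']; ring_nf
  have hs : Real.sin θ = 2 * Real.sin (θ/2) * Real.cos (θ/2) := by
    rw [← Real.sin_two_mul]; ring_nf
  have hpyth := Real.sin_sq_add_cos_sq (θ/2)
  rw [hrw, Complex.norm_def, Complex.normSq_add_mul_I]
  have : (1 - Real.cos θ)^2 + (-Real.sin θ)^2 = (2*|Real.sin (θ/2)|)^2 := by
    have habs : (2*|Real.sin (θ/2)|)^2 = 4 * Real.sin (θ/2)^2 := by
      rw [mul_pow, sq_abs]; ring
    rw [habs, hc, hs]
    nlinarith [hpyth]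
  rw [this, Real.sqrt_sq (by positivity)]

/-- telescoping tail bound -/
lemma dft_tail_sum (a : ℤ) (ha : 2 ≤ a) (b : ℤ) :
    (∑ m ∈ Finset.Icc a b, (1:ℝ)/(m:ℝ)^2) ≤ 1/((a:ℝ)-1) := by
  have ha1 : (0:ℝ) < (a:ℝ) - 1 := by
    have : (2:ℝ) ≤ (a:ℝ) := by exact_mod_cast ha
    linarith
  rcases lt_or_ge b (a-1) with hb | hb
  · rw [Finset.Icc_eq_empty (by omega), Finset.sum_empty]
    exact div_nonneg zero_le_one ha1.le
  · have base : (∑ m ∈ Finset.Icc a (a-1), (1:ℝ)/(m:ℝ)^2) ≤ 1/((a:ℝ)-1) - 1/((a:ℝ)-1) := by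
      rw [Finset.Icc_eq_empty (by omega), Finset.sum_empty]
      simp
    have step : ∀ b : ℤ, a - 1 ≤ b →
        ((∑ m ∈ Finset.Icc a b, (1:ℝ)/(m:ℝ)^2) ≤ 1/((a:ℝ)-1) - 1/((b:ℝ))) →
        ((∑ m ∈ Finset.Icc a (b+1), (1:ℝ)/(m:ℝ)^2) ≤ 1/((a:ℝ)-1) - 1/((b:ℝ)+1)) := by
      intro b hb ih
      have hb1 : (1:ℝ) ≤ (b:ℝ) := by
        have : (1:ℤ) ≤ b := by omega
        exact_mod_cast this
      have hins : Finset.Icc a (b+1) = insert (b+1) (Finset.Icc a b) := by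
        ext x; simp only [Finset.mem_Icc, Finset.mem_insert]; omega
      rw [hins, Finset.sum_insert (by simp only [Finset.mem_Icc]; omega)]
      have hstep : (1:ℝ)/((b:ℝ)+1)^2 ≤ 1/(b:ℝ) - 1/((b:ℝ)+1) := by
        rw [div_sub_div _ _ (by linarith) (by linarith)]
        rw [div_le_div_iff₀ (by positivity) (by positivity)]
        nlinarith
      push_cast
      linarith
    have main : ∀ b : ℤ, a - 1 ≤ b →
        ((∑ m ∈ Finset.Icc a b, (1:ℝ)/(m:ℝ)^2) ≤ 1/((a:ℝ)-1) - 1/((b:ℝ))) := by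
      exact Int.le_induction (by exact_mod_cast base)
        (fun n hn ih => by exact_mod_cast step n hn (by exact_mod_cast ih))
    have hbpos : (0:ℝ) < (b:ℝ) := by
      have h1 : (1:ℤ) ≤ b := by omega
      have : (1:ℝ) ≤ (b:ℝ) := by exact_mod_cast h1
      linarith
    have h0 : (0:ℝ) ≤ 1/(b:ℝ) := by positivity
    linarith [main b hb]

open Set in
/-- Mean value / second-difference bounds for a smooth function on [-1,1]. -/
lemma dft_smooth_bounds (g : ℝ → ℂ) (hg : ContDiffOn ℝ (⊤ : ℕ∞) g (Set.Icc (-1) 1)) :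
    ∃ L M : ℝ, 0 ≤ L ∧ 0 ≤ M ∧
      (∀ x ∈ Set.Icc (-1:ℝ) 1, ∀ y ∈ Set.Icc (-1:ℝ) 1, ‖g y - g x‖ ≤ L * |y - x|) ∧
      (∀ x h : ℝ, 0 ≤ h → x ∈ Set.Icc (-1:ℝ) 1 → x + 2*h ∈ Set.Icc (-1:ℝ) 1 →
        ‖g (x + 2*h) - 2*g (x+h) + g x‖ ≤ M * h^2) := by
  set s : Set ℝ := Set.Icc (-1:ℝ) 1 with hs_def
  have hs : UniqueDiffOn ℝ s := uniqueDiffOn_Icc (by norm_num)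
  have hconv : Convex ℝ s := convex_Icc _ _
  have hcmp : IsCompact s := isCompact_Icc
  set g1 : ℝ → ℂ := derivWithin g s with hg1_def
  set g2 : ℝ → ℂ := derivWithin g1 s with hg2_def
  have hgd : ContDiffOn ℝ 1 g1 s := hg.derivWithin hs (by exact WithTop.coe_le_coe.2 le_top)
  have hder : ∀ x ∈ s, HasDerivWithinAt g (g1 x) s x := fun x hx =>
    ((hg.differentiableOn (by simp)) x hx).hasDerivWithinAt
  have hder1 : ∀ x ∈ s, HasDerivWithinAt g1 (g2 x) s x := fun x hx =>
    ((hgd.differentiableOn (by simp)) x hx).hasDerivWithinAt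
  obtain ⟨L0, hL0⟩ := hcmp.exists_bound_of_continuousOn hgd.continuousOn
  obtain ⟨M0, hM0⟩ := hcmp.exists_bound_of_continuousOn
    (hgd.continuousOn_derivWithin hs le_rfl)
  set L := max L0 0 with hL_def
  set M := max M0 0 with hM_def
  have hL : ∀ x ∈ s, ‖g1 x‖ ≤ L := fun x hx => (hL0 x hx).trans (le_max_left _ _)
  have hM : ∀ x ∈ s, ‖g2 x‖ ≤ M := fun x hx => (hM0 x hx).trans (le_max_left _ _)
  have hLip : ∀ x ∈ s, ∀ y ∈ s, ‖g y - g x‖ ≤ L * |y - x| := by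
    intro x hx y hy
    have := hconv.norm_image_sub_le_of_norm_hasDerivWithin_le hder hL hx hy
    rwa [Real.norm_eq_abs] at this
  have hLip1 : ∀ x ∈ s, ∀ y ∈ s, ‖g1 y - g1 x‖ ≤ M * |y - x| := by
    intro x hx y hy
    have := hconv.norm_image_sub_le_of_norm_hasDerivWithin_le hder1 hM hx hy
    rwa [Real.norm_eq_abs] at this
  refine ⟨L, M, le_max_right _ _, le_max_right _ _, hLip, ?_⟩
  intro x h hh hx hx2
  have hxh : x + h ∈ s := by
    simp only [hs_def, Set.mem_Icc] at hx hx2 ⊢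
    constructor <;> linarith
  set T : Set ℝ := Set.Icc x (x+h) with hT_def
  have hTs : T ⊆ s := by
    intro t ht
    simp only [hT_def, Set.mem_Icc] at ht
    simp only [hs_def, Set.mem_Icc] at hx hx2 ⊢
    constructor <;> linarith
  have hTs' : ∀ t ∈ T, t + h ∈ s := by
    intro t ht
    simp only [hT_def, Set.mem_Icc] at ht
    simp only [hs_def, Set.mem_Icc] at hx hx2 ⊢
    constructor <;> linarith
  set φ : ℝ → ℂ := fun t => g (t + h) - g t with hφ_def
  have hφd : ∀ t ∈ T, HasDerivWithinAt φ (g1 (t+h) - g1 t) T t := by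
    intro t ht
    have h1 : HasDerivWithinAt (fun u => g (u + h)) (g1 (t+h)) T t := by
      have hcomp : HasDerivWithinAt (g ∘ (fun u => u + h)) ((1:ℝ) • g1 (t+h)) T t :=
        HasDerivWithinAt.scomp_of_eq t (hder (t+h) (hTs' t ht))
          ((hasDerivWithinAt_id t T).add_const h)
          (fun u hu => hTs' u hu) (by simp)
      simpa [Function.comp_def] using hcomp
    exact h1.sub ((hder t (hTs ht)).mono hTs)
  have hφb : ∀ t ∈ T, ‖g1 (t+h) - g1 t‖ ≤ M * h := by
    intro t ht
    have := hLip1 t (hTs ht) (t+h) (hTs' t ht)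
    simpa [abs_of_nonneg hh] using this
  have hmvt := (convex_Icc x (x+h)).norm_image_sub_le_of_norm_hasDerivWithin_le
    hφd hφb (Set.left_mem_Icc.2 (by linarith)) (Set.right_mem_Icc.2 (by linarith))
  have heq : φ (x+h) - φ x = g (x + 2*h) - 2*g (x+h) + g x := by
    simp only [hφ_def]
    rw [show x + h + h = x + 2*h by ring]
    ring
  rw [heq, Real.norm_eq_abs] at hmvt
  calc ‖g (x + 2*h) - 2*g (x+h) + g x‖ ≤ M * h * |x + h - x| := hmvt
    _ = M * h^2 := by rw [show x + h - x = h by ring, abs_of_nonneg hh]; ring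

set_option maxHeartbeats 2000000 in
lemma dft_key (g : ℝ → ℂ) (hper : g (-1) = g 1)
    (L M : ℝ) (hL0 : 0 ≤ L) (hM0 : 0 ≤ M)
    (hLip : ∀ x ∈ Set.Icc (-1:ℝ) 1, ∀ y ∈ Set.Icc (-1:ℝ) 1,
      ‖g y - g x‖ ≤ L * |y - x|)
    (hSec : ∀ x h : ℝ, 0 ≤ h → x ∈ Set.Icc (-1:ℝ) 1 → x + 2*h ∈ Set.Icc (-1:ℝ) 1 →
      ‖g (x + 2*h) - 2*g (x+h) + g x‖ ≤ M * h^2)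
    (n : ℕ) (hn : 1 ≤ n) (m : ℤ) (hm0 : m ≠ 0) (hmn : |m| ≤ (n:ℤ)) :
    ‖(1 / (n : ℂ)) * ∑ j ∈ Finset.Icc (-(n:ℤ)) ((n:ℤ)-1),
        g ((j : ℝ) / (n : ℝ)) *
          Complex.exp (-((Real.pi : ℂ) * Complex.I * ((j : ℂ) / (n : ℂ)) * (m : ℂ)))‖
      ≤ (L + M) / (m:ℝ)^2 := by
  have hnR : (0:ℝ) < (n:ℝ) := by exact_mod_cast hn
  have hnZ : (1:ℤ) ≤ (n:ℤ) := by exact_mod_cast hn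
  have hnC : (n:ℂ) ≠ 0 := Nat.cast_ne_zero.2 (by omega)
  set c : ℂ := Complex.exp ((↑(-(Real.pi * (m:ℝ) / (n:ℝ))):ℂ) * Complex.I) with hc_def
  have hc0 : c ≠ 0 := Complex.exp_ne_zero _
  have hczpow : ∀ j : ℤ, c ^ j
      = Complex.exp ((j:ℂ) * ((↑(-(Real.pi * (m:ℝ) / (n:ℝ))):ℂ) * Complex.I)) :=
    fun j => (Complex.exp_int_mul _ j).symm
  have hc2n : c ^ (2*(n:ℤ)) = 1 := by
    rw [hczpow]
    have e : ((2*(n:ℤ) : ℤ) : ℂ) * ((↑(-(Real.pi * (m:ℝ) / (n:ℝ))):ℂ) * Complex.I)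
        = ((-m : ℤ):ℂ) * (2*(Real.pi:ℂ)*Complex.I) := by
      push_cast
      field_simp
    rw [e, Complex.exp_int_mul_two_pi_mul_I]
  set r : ℤ → ℤ := fun j => (j + n) % (2*(n:ℤ)) - n with hr_def
  set A : ℤ → ℂ := fun j => g ((r j : ℝ) / (n:ℝ)) with hA_def
  have hr_per : ∀ j, r (j + 2*n) = r j := by
    intro j
    simp only [hr_def]
    congr 1
    rw [show j + 2*(n:ℤ) + n = j + n + 2*n*1 by ring, Int.add_mul_emod_self_left]
  have hr_id : ∀ j, -(n:ℤ) ≤ j → j ≤ (n:ℤ) - 1 → r j = j := by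
    intro j h1 h2
    simp only [hr_def]
    rw [Int.emod_eq_of_lt (by omega) (by omega)]
    omega
  have hr_n : r (n:ℤ) = -(n:ℤ) := by
    simp only [hr_def]
    rw [show (n:ℤ) + n = 2*n by ring, Int.emod_self]
    omega
  have hA_per : ∀ j, A (j + 2*n) = A j := by
    intro j; simp only [hA_def, hr_per]
  have hA_n : A (n:ℤ) = g 1 := by
    simp only [hA_def]
    rw [hr_n, ← hper]
    congr 1
    push_cast
    rw [neg_div, div_self hnR.ne']
  have hA_val : ∀ k : ℤ, -(n:ℤ) ≤ k → k ≤ (n:ℤ) → A k = g ((k:ℝ)/(n:ℝ)) := by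
    intro k h1 h2
    rcases h2.lt_or_eq with h2' | rfl
    · simp only [hA_def]; rw [hr_id k h1 (by omega)]
    · rw [hA_n]
      congr 1
      push_cast
      rw [div_self hnR.ne']
  set I := Finset.Icc (-(n:ℤ)) ((n:ℤ)-1) with hI
  set S := ∑ j ∈ I, A j * c ^ j with hS_def
  have hS : ∑ j ∈ I, g ((j : ℝ) / (n : ℝ)) *
      Complex.exp (-((Real.pi : ℂ) * Complex.I * ((j : ℂ) / (n : ℂ)) * (m : ℂ))) = S := by
    apply Finset.sum_congr rfl
    intro j hj
    simp only [hI, Finset.mem_Icc] at hj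
    congr 1
    · rw [hA_val j hj.1 (by omega)]
    · rw [hczpow j]
      congr 1
      push_cast
      ring
  set D : ℤ → ℂ := fun j => A (j+1) - A j with hD_def
  have hD_per : ∀ j, D (j + 2*n) = D j := by
    intro j
    simp only [hD_def]
    rw [show j + 2*(n:ℤ) + 1 = (j+1) + 2*n by ring, hA_per, hA_per]
  have h1 : ∑ j ∈ I, (A (j+1) - A j) * c ^ j = (c⁻¹ - 1) * S :=
    dft_abel n c hc0 hc2n A hA_per
  have h2 : ∑ j ∈ I, (D (j+1) - D j) * c ^ j = (c⁻¹ - 1) * ∑ j ∈ I, D j * c ^ j :=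
    dft_abel n c hc0 hc2n D hD_per
  have hS2 : ∑ j ∈ I, (D (j+1) - D j) * c ^ j = (c⁻¹ - 1)^2 * S := by
    rw [h2]
    have : ∑ j ∈ I, D j * c ^ j = (c⁻¹ - 1) * S := h1
    rw [this]
    ring
  -- norm of c-powers
  have hc_abs : ‖c‖ = 1 := by
    rw [hc_def, Complex.norm_exp]
    simp
  have hcj_abs : ∀ j : ℤ, ‖c ^ j‖ = 1 := by
    intro j
    rw [norm_zpow, hc_abs, one_zpow]
  -- bound each second difference
  have hmem : ∀ k : ℤ, -(n:ℤ) ≤ k → k ≤ (n:ℤ) → ((k:ℝ)/(n:ℝ)) ∈ Set.Icc (-1:ℝ) 1 := by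
    intro k h1 h2
    have hk1 : (-(n:ℝ)) ≤ (k:ℝ) := by exact_mod_cast h1
    have hk2 : (k:ℝ) ≤ (n:ℝ) := by exact_mod_cast h2
    constructor
    · rw [le_div_iff₀ hnR]; linarith
    · rw [div_le_one hnR]; linarith
  have hint : ∀ j ∈ Finset.Icc (-(n:ℤ)) ((n:ℤ)-2),
      ‖A (j+2) - 2*A (j+1) + A j‖ ≤ M * (1/(n:ℝ))^2 := by
    intro j hj
    simp only [Finset.mem_Icc] at hj
    rw [hA_val j hj.1 (by omega), hA_val (j+1) (by omega) (by omega),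
      hA_val (j+2) (by omega) (by omega)]
    have e2 : ((j:ℝ)+2)/(n:ℝ) = (j:ℝ)/(n:ℝ) + 2*(1/(n:ℝ)) := by field_simp
    have e1 : ((j:ℝ)+1)/(n:ℝ) = (j:ℝ)/(n:ℝ) + 1/(n:ℝ) := by field_simp
    have hx : ((j:ℝ)/(n:ℝ)) ∈ Set.Icc (-1:ℝ) 1 := hmem j hj.1 (by omega)
    have hx2 : ((j:ℝ)/(n:ℝ) + 2*(1/(n:ℝ))) ∈ Set.Icc (-1:ℝ) 1 := by
      rw [← e2]
      have := hmem (j+2) (by omega) (by omega)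
      push_cast at this
      exact this
    have := hSec ((j:ℝ)/(n:ℝ)) (1/(n:ℝ)) (by positivity) hx hx2
    push_cast
    rw [e2, e1]
    exact this
  have hbd : ‖A ((n:ℤ)-1+2) - 2*A ((n:ℤ)-1+1) + A ((n:ℤ)-1)‖ ≤ 2*L/(n:ℝ) := by
    have ha2 : A ((n:ℤ)-1+2) = g (((1:ℝ)-(n:ℝ))/(n:ℝ)) := by
      rw [show (n:ℤ)-1+2 = (1-(n:ℤ)) + 2*n by ring, hA_per,
        hA_val (1-(n:ℤ)) (by omega) (by omega)]
      push_cast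
      ring_nf
    have ha1 : A ((n:ℤ)-1+1) = g 1 := by
      rw [show (n:ℤ)-1+1 = (n:ℤ) by ring, hA_n]
    have ha0 : A ((n:ℤ)-1) = g (((n:ℝ)-1)/(n:ℝ)) := by
      rw [hA_val ((n:ℤ)-1) (by omega) (by omega)]
      push_cast
      ring_nf
    rw [ha2, ha1, ha0]
    have hsplit : g (((1:ℝ)-(n:ℝ))/(n:ℝ)) - 2*g 1 + g (((n:ℝ)-1)/(n:ℝ))
        = (g (((1:ℝ)-(n:ℝ))/(n:ℝ)) - g (-1)) + (g (((n:ℝ)-1)/(n:ℝ)) - g 1) := by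
      rw [hper]; ring
    rw [hsplit]
    have hu : ((1:ℝ)-(n:ℝ))/(n:ℝ) ∈ Set.Icc (-1:ℝ) 1 := by
      have h := hmem (1-(n:ℤ)) (by omega) (by omega)
      push_cast at h
      exact h
    have hv : ((n:ℝ)-1)/(n:ℝ) ∈ Set.Icc (-1:ℝ) 1 := by
      have h := hmem ((n:ℤ)-1) (by omega) (by omega)
      push_cast at h
      exact h
    have hm1 : (-1:ℝ) ∈ Set.Icc (-1:ℝ) 1 := by norm_num
    have hp1 : (1:ℝ) ∈ Set.Icc (-1:ℝ) 1 := by norm_num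
    have b1 := hLip (-1) hm1 (((1:ℝ)-(n:ℝ))/(n:ℝ)) hu
    have b2 := hLip 1 hp1 (((n:ℝ)-1)/(n:ℝ)) hv
    have e1 : |((1:ℝ)-(n:ℝ))/(n:ℝ) - (-1)| = 1/(n:ℝ) := by
      rw [show ((1:ℝ)-(n:ℝ))/(n:ℝ) - (-1) = 1/(n:ℝ) by field_simp; ring]
      exact abs_of_pos (by positivity)
    have e2 : |((n:ℝ)-1)/(n:ℝ) - 1| = 1/(n:ℝ) := by
      rw [show ((n:ℝ)-1)/(n:ℝ) - 1 = -(1/(n:ℝ)) by field_simp; ring, abs_neg]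
      exact abs_of_pos (by positivity)
    rw [e1] at b1
    rw [e2] at b2
    calc ‖(g (((1:ℝ)-(n:ℝ))/(n:ℝ)) - g (-1)) + (g (((n:ℝ)-1)/(n:ℝ)) - g 1)‖
        ≤ ‖g (((1:ℝ)-(n:ℝ))/(n:ℝ)) - g (-1)‖
          + ‖g (((n:ℝ)-1)/(n:ℝ)) - g 1‖ := norm_add_le _ _
      _ ≤ L * (1/(n:ℝ)) + L * (1/(n:ℝ)) := add_le_add b1 b2
      _ = 2*L/(n:ℝ) := by ring
  -- total bound on S2
  have habs2 : ‖∑ j ∈ I, (D (j+1) - D j) * c ^ j‖ ≤ (2*L + 2*M)/(n:ℝ) := by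
    have step1 : ‖∑ j ∈ I, (D (j+1) - D j) * c ^ j‖
        ≤ ∑ j ∈ I, ‖A (j+2) - 2*A (j+1) + A j‖ := by
      refine (norm_sum_le _ _).trans (le_of_eq (Finset.sum_congr rfl fun j _ => ?_))
      rw [norm_mul, hcj_abs, mul_one]
      congr 1
      simp only [hD_def]
      ring
    have hsplitI : I = insert ((n:ℤ)-1) (Finset.Icc (-(n:ℤ)) ((n:ℤ)-2)) := by
      simp only [hI]
      ext x
      simp only [Finset.mem_Icc, Finset.mem_insert]
      omega
    have step2 : ∑ j ∈ I, ‖A (j+2) - 2*A (j+1) + A j‖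
        ≤ 2*L/(n:ℝ) + (2*(n:ℝ)-1) * (M * (1/(n:ℝ))^2) := by
      rw [hsplitI, Finset.sum_insert (by simp only [Finset.mem_Icc]; omega)]
      have hcard : ((Finset.Icc (-(n:ℤ)) ((n:ℤ)-2)).card : ℝ) = 2*(n:ℝ) - 1 := by
        rw [Int.card_Icc]
        rw [show (n:ℤ) - 2 + 1 - -(n:ℤ) = 2*n - 1 by ring]
        have h2 : ((2*(n:ℤ) - 1).toNat : ℤ) = 2*(n:ℤ) - 1 := Int.toNat_of_nonneg (by omega)
        calc ((2*(n:ℤ)-1).toNat : ℝ) = (((2*(n:ℤ)-1).toNat : ℤ) : ℝ) := by push_cast; ring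
          _ = ((2*(n:ℤ)-1 : ℤ) : ℝ) := by rw [h2]
          _ = 2*(n:ℝ)-1 := by push_cast; ring
      have hsum : ∑ j ∈ Finset.Icc (-(n:ℤ)) ((n:ℤ)-2), ‖A (j+2) - 2*A (j+1) + A j‖
          ≤ (2*(n:ℝ)-1) * (M * (1/(n:ℝ))^2) := by
        calc ∑ j ∈ Finset.Icc (-(n:ℤ)) ((n:ℤ)-2), ‖A (j+2) - 2*A (j+1) + A j‖
            ≤ (Finset.Icc (-(n:ℤ)) ((n:ℤ)-2)).card • (M * (1/(n:ℝ))^2) :=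
              Finset.sum_le_card_nsmul _ _ _ hint
          _ = (2*(n:ℝ)-1) * (M * (1/(n:ℝ))^2) := by
              rw [nsmul_eq_mul, hcard]
      exact add_le_add hbd hsum
    have step3 : 2*L/(n:ℝ) + (2*(n:ℝ)-1) * (M * (1/(n:ℝ))^2) ≤ (2*L + 2*M)/(n:ℝ) := by
      have h1n : (1:ℝ) ≤ (n:ℝ) := by exact_mod_cast hn
      have hexp : (2*L/(n:ℝ) + (2*(n:ℝ)-1)*(M*(1/(n:ℝ))^2)) * (n:ℝ)^2
          = 2*L*(n:ℝ) + (2*(n:ℝ)-1)*M := by field_simp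
      have hexp2 : ((2*L+2*M)/(n:ℝ)) * (n:ℝ)^2 = (2*L+2*M)*(n:ℝ) := by
        field_simp
      have hineq : 2*L*(n:ℝ) + (2*(n:ℝ)-1)*M ≤ (2*L+2*M)*(n:ℝ) := by
        nlinarith [hM0, h1n]
      exact le_of_mul_le_mul_right (by rw [hexp, hexp2]; exact hineq) (pow_pos hnR 2)
    exact step1.trans (step2.trans step3)
  -- lower bound for |c⁻¹ - 1|
  set q : ℝ := ‖c⁻¹ - 1‖ with hq_def
  have hq : 2*|(m:ℝ)|/(n:ℝ) ≤ q := by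
    have hcinv : c⁻¹ = Complex.exp ((↑(Real.pi * (m:ℝ) / (n:ℝ)):ℂ) * Complex.I) := by
      rw [hc_def, ← Complex.exp_neg]
      congr 1
      push_cast
      ring
    have : q = 2 * |Real.sin ((Real.pi * (m:ℝ) / (n:ℝ))/2)| := by
      rw [hq_def, norm_sub_rev, hcinv]
      exact abs_one_sub_exp_mul_I _
    rw [this]
    have hmabs : |(m:ℝ)| ≤ (n:ℝ) := by
      have : ((|m| : ℤ) : ℝ) ≤ ((n:ℤ):ℝ) := by exact_mod_cast hmn
      rwa [Int.cast_abs] at this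
    have habs_half : |(Real.pi * (m:ℝ) / (n:ℝ))/2| = Real.pi * |(m:ℝ)| / (2*(n:ℝ)) := by
      rw [abs_div, abs_div, abs_mul]
      rw [abs_of_pos Real.pi_pos, abs_of_pos hnR, abs_of_pos (by norm_num : (0:ℝ) < 2)]
      ring
    have hhalf : |(Real.pi * (m:ℝ) / (n:ℝ))/2| ≤ Real.pi / 2 := by
      rw [habs_half, div_le_div_iff₀ (by positivity) (by norm_num)]
      nlinarith [Real.pi_pos, hmabs, hnR]
    have hjordan := Real.mul_abs_le_abs_sin hhalf
    rw [habs_half] at hjordan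
    have : 2/Real.pi * (Real.pi * |(m:ℝ)| / (2*(n:ℝ))) = |(m:ℝ)|/(n:ℝ) := by
      field_simp
    rw [this] at hjordan
    calc 2*|(m:ℝ)|/(n:ℝ) = 2 * (|(m:ℝ)|/(n:ℝ)) := by ring
      _ ≤ 2 * |Real.sin ((Real.pi * (m:ℝ) / (n:ℝ))/2)| := by linarith
  -- assemble
  have hmR : (m:ℝ) ≠ 0 := Int.cast_ne_zero.2 hm0
  have hm2 : (0:ℝ) < (m:ℝ)^2 := by positivity
  have habsS2eq : ‖∑ j ∈ I, (D (j+1) - D j) * c ^ j‖ = q^2 * ‖S‖ := by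
    rw [hS2, norm_mul, norm_pow]
  have hkey : q^2 * ‖S‖ ≤ (2*L + 2*M)/(n:ℝ) := habsS2eq ▸ habs2
  have hqn : 2*|(m:ℝ)| ≤ q * (n:ℝ) := (div_le_iff₀ hnR).1 hq
  have hq2 : 4*(m:ℝ)^2 ≤ q^2 * (n:ℝ)^2 := by
    nlinarith [hqn, abs_nonneg (m:ℝ), sq_abs (m:ℝ), hnR]
  have habs2' : q^2 * ‖S‖ * (n:ℝ) ≤ 2*L + 2*M := by
    have := mul_le_mul_of_nonneg_right hkey hnR.le
    calc q^2 * ‖S‖ * (n:ℝ) ≤ (2*L + 2*M)/(n:ℝ) * (n:ℝ) := this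
      _ = 2*L + 2*M := by field_simp
  rw [norm_mul, norm_div, norm_one, Complex.norm_natCast, hS]
  rw [show (1:ℝ)/(n:ℝ) * ‖S‖ = ‖S‖ / (n:ℝ) by ring,
    div_le_div_iff₀ hnR hm2]
  nlinarith [mul_le_mul_of_nonneg_right habs2' hnR.le,
    mul_le_mul_of_nonneg_right hq2 (norm_nonneg S),
    mul_nonneg (add_nonneg hL0 hM0) hnR.le, norm_nonneg S, hnR]

/-- For a smooth function g on [-1,1] with g(-1) = g(1), the tails of the discrete
Fourier coefficients are uniformly small: for every ε > 0 there is N(ε) such that for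
all n > N(ε) and all N(ε) < a ≤ b ≤ n, the sum of |ĝ_n(m)| over grid frequencies m
with a ≤ m ≤ b (and likewise over -b ≤ m ≤ -a) is less than ε. -/
theorem discrete_fourier_uniform_tail_bound
    (g : ℝ → ℂ) (hg : ContDiffOn ℝ (⊤ : ℕ∞) g (Set.Icc (-1) 1)) (hper : g (-1) = g 1)
    (ghat : ℕ → ℤ → ℂ)
    (hghat : ∀ (n : ℕ) (m : ℤ),
      ghat n m = (1 / (n : ℂ)) * ∑ j ∈ Finset.Icc (-(n : ℤ)) ((n : ℤ) - 1),
        g ((j : ℝ) / (n : ℝ)) *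
          Complex.exp (-((Real.pi : ℂ) * Complex.I * ((j : ℂ) / (n : ℂ)) * (m : ℂ)))) :
    ∀ ε : ℝ, 0 < ε → ∃ N : ℕ, ∀ n : ℕ, N < n →
      ∀ a b : ℤ, (N : ℤ) < a → a ≤ b → b ≤ (n : ℤ) →
        (∑ m ∈ (Finset.Icc (-(n : ℤ)) ((n : ℤ) - 1)).filter (fun m => a ≤ m ∧ m ≤ b),
            ‖ghat n m‖) < ε ∧
        (∑ m ∈ (Finset.Icc (-(n : ℤ)) ((n : ℤ) - 1)).filter (fun m => -b ≤ m ∧ m ≤ -a),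
            ‖ghat n m‖) < ε := by
  obtain ⟨L, M, hL0, hM0, hLip, hSec⟩ := dft_smooth_bounds g hg
  intro ε hε
  set C : ℝ := L + M with hC_def
  have hC : 0 ≤ C := add_nonneg hL0 hM0
  refine ⟨Nat.ceil (C/ε) + 1, ?_⟩
  intro n hn a b ha hab hbn
  set N : ℕ := Nat.ceil (C/ε) + 1 with hN_def
  have hN1 : 1 ≤ N := by omega
  have hn1 : 1 ≤ n := by omega
  have hNa : (N:ℤ) < a := ha
  have ha2 : 2 ≤ a := by omega
  have hNpos : (0:ℝ) < (N:ℝ) := by exact_mod_cast hN1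
  have hCN : C * (1/(N:ℝ)) < ε := by
    have h1 : C/ε < (N:ℝ) := by
      have h2 := Nat.le_ceil (C/ε)
      have h3 : ((Nat.ceil (C/ε) : ℕ) : ℝ) < (N:ℝ) := by
        exact_mod_cast Nat.lt_succ_self _
      linarith
    have h4 : C < (N:ℝ) * ε := by
      rcases (div_lt_iff₀ hε).1 h1 with h
      linarith
    rw [mul_one_div, div_lt_iff₀ hNpos]
    linarith
  have haN : (N:ℝ) ≤ (a:ℝ) - 1 := by
    have h0 : (N:ℤ) ≤ a - 1 := by omega
    calc (N:ℝ) = (((N:ℤ)):ℝ) := by push_cast; ring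
      _ ≤ ((a - 1 : ℤ):ℝ) := by exact_mod_cast h0
      _ = (a:ℝ) - 1 := by push_cast; ring
  have htail : (∑ m ∈ Finset.Icc a b, (1:ℝ)/(m:ℝ)^2) ≤ 1/(N:ℝ) := by
    refine (dft_tail_sum a ha2 b).trans ?_
    apply one_div_le_one_div_of_le hNpos haN
  have key : ∀ m : ℤ, m ≠ 0 → |m| ≤ (n:ℤ) → ‖ghat n m‖ ≤ C/(m:ℝ)^2 := by
    intro m hm0 hmn
    rw [hghat n m]
    exact dft_key g hper L M hL0 hM0 hLip hSec n hn1 m hm0 hmn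
  have bound : ∀ (F : Finset ℤ), (∀ m ∈ F, m ≠ 0 ∧ |m| ≤ (n:ℤ)) →
      (∀ T : Finset ℤ, F ⊆ T → ((∑ m ∈ T, C/(m:ℝ)^2) ≤ C * (1/(N:ℝ)) →
        (∑ m ∈ F, ‖ghat n m‖) < ε)) := by
    intro F hF T hsub hT
    calc ∑ m ∈ F, ‖ghat n m‖
        ≤ ∑ m ∈ F, C/(m:ℝ)^2 :=
          Finset.sum_le_sum fun m hm => key m (hF m hm).1 (hF m hm).2
      _ ≤ ∑ m ∈ T, C/(m:ℝ)^2 :=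
          Finset.sum_le_sum_of_subset_of_nonneg hsub
            (fun i _ _ => div_nonneg hC (sq_nonneg _))
      _ ≤ C * (1/(N:ℝ)) := hT
      _ < ε := hCN
  have hsumIcc : (∑ m ∈ Finset.Icc a b, C/(m:ℝ)^2) ≤ C * (1/(N:ℝ)) := by
    calc ∑ m ∈ Finset.Icc a b, C/(m:ℝ)^2
        = C * ∑ m ∈ Finset.Icc a b, (1:ℝ)/(m:ℝ)^2 := by
          rw [Finset.mul_sum]
          exact Finset.sum_congr rfl fun m _ => by rw [mul_one_div]
      _ ≤ C * (1/(N:ℝ)) := mul_le_mul_of_nonneg_left htail hC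
  have hsumIccNeg : (∑ m ∈ Finset.Icc (-b) (-a), C/(m:ℝ)^2) ≤ C * (1/(N:ℝ)) := by
    have : (∑ m ∈ Finset.Icc (-b) (-a), C/(m:ℝ)^2) = ∑ m ∈ Finset.Icc a b, C/(m:ℝ)^2 := by
      refine Finset.sum_nbij' (fun m => -m) (fun m => -m) ?_ ?_ ?_ ?_ ?_
      · intro x hx; simp only [Finset.mem_Icc] at *; omega
      · intro x hx; simp only [Finset.mem_Icc] at *; omega
      · intro x _; ring
      · intro x _; ring
      · intro x _; push_cast; rw [neg_sq]
    rw [this]; exact hsumIcc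
  constructor
  · refine bound _ ?_ (Finset.Icc a b) ?_ hsumIcc
    · intro m hm
      simp only [Finset.mem_filter, Finset.mem_Icc] at hm
      refine ⟨by omega, abs_le.2 ⟨by omega, by omega⟩⟩
    · intro x hx
      simp only [Finset.mem_filter, Finset.mem_Icc] at hx ⊢
      omega
  · refine bound _ ?_ (Finset.Icc (-b) (-a)) ?_ hsumIccNeg
    · intro m hm
      simp only [Finset.mem_filter, Finset.mem_Icc] at hm
      refine ⟨by omega, abs_le.2 ⟨by omega, by omega⟩⟩
    · intro x hx
      simp only [Finset.mem_filter, Finset.mem_Icc] at hx ⊢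
      omega
end
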